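/- arXiv:1707.09556 — 9 statements merged into one kernel-verified Lean document; each statement's English description precedes it below -/
import Mathlib

section
/- If an oriented graph on m² vertices contains no transitive tournament on 3 vertices, then it contains an independent set of size m. -/
/-- An oriented graph: no loops, at most one directed edge per pair
(asymmetry implies irreflexivity). -/
def IsOriented {V : Type*} (E : V → V → Prop) : Prop :=
  ∀ x y, E x y → ¬ E y x

/-- The graph contains an independent set of size `m`. -/
def HasIndep {V : Type*} (E : V → V → Prop) (m : ℕ) : Prop :=
  ∃ s : Finset V, s.card = m ∧ ∀ x ∈ s, ∀ y ∈ s, ¬ E x y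

/-- The graph contains a transitive tournament on `n` vertices. -/
def HasTransTour {V : Type*} (E : V → V → Prop) (n : ℕ) : Prop :=
  ∃ f : Fin n ↪ V, ∀ i j : Fin n, i < j → E (f i) (f j)

theorem stmt3_aux (m : ℕ) : ∀ {V : Type*} [Fintype V] (E : V → V → Prop),
    IsOriented E → (¬ ∃ a b c : V, E a b ∧ E b c ∧ E a c) →
    m * m ≤ Fintype.card V → HasIndep E m := by
  induction m with
  | zero =>
    intro V _ E _ _ _
    exact ⟨∅, rfl, by simp⟩
  | succ m ih =>
    intro V _ E hor hL3 hcard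
    classical
    have hpos : 0 < Fintype.card V := lt_of_lt_of_le (by positivity) hcard
    obtain ⟨v⟩ := Fintype.card_pos_iff.mp hpos
    set Nout := Finset.univ.filter (fun u => E v u) with hNout
    set Nin := Finset.univ.filter (fun u => E u v) with hNin
    by_cases hout : m + 1 ≤ Nout.card
    · obtain ⟨s, hs, hsc⟩ := Finset.exists_subset_card_eq hout
      refine ⟨s, hsc, ?_⟩
      intro x hx y hy hxy
      have hvx : E v x := (Finset.mem_filter.mp (hs hx)).2
      have hvy : E v y := (Finset.mem_filter.mp (hs hy)).2
      exact hL3 ⟨v, x, y, hvx, hxy, hvy⟩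
    by_cases hin : m + 1 ≤ Nin.card
    · obtain ⟨s, hs, hsc⟩ := Finset.exists_subset_card_eq hin
      refine ⟨s, hsc, ?_⟩
      intro x hx y hy hxy
      have hxv : E x v := (Finset.mem_filter.mp (hs hx)).2
      have hyv : E y v := (Finset.mem_filter.mp (hs hy)).2
      exact hL3 ⟨x, y, v, hxy, hyv, hxv⟩
    · set W := Finset.univ.filter (fun u => u ≠ v ∧ ¬ E v u ∧ ¬ E u v) with hW
      have hcover : (Finset.univ : Finset V) ⊆ W ∪ Nout ∪ Nin ∪ {v} := by
        intro u _
        simp only [Finset.mem_union, hW, hNout, hNin, Finset.mem_filter,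
          Finset.mem_univ, true_and, Finset.mem_singleton]
        by_cases h1 : u = v
        · tauto
        by_cases h2 : E v u
        · tauto
        by_cases h3 : E u v <;> tauto
      have hcardle : Fintype.card V ≤ W.card + Nout.card + Nin.card + 1 := by
        have := Finset.card_le_card hcover
        calc Fintype.card V = (Finset.univ : Finset V).card := (Finset.card_univ).symm
          _ ≤ (W ∪ Nout ∪ Nin ∪ {v}).card := this
          _ ≤ (W ∪ Nout ∪ Nin).card + ({v} : Finset V).card := Finset.card_union_le _ _
          _ ≤ ((W ∪ Nout).card + Nin.card) + 1 := by
              simp only [Finset.card_singleton]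
              exact Nat.add_le_add_right (Finset.card_union_le _ _) 1
          _ ≤ (W.card + Nout.card + Nin.card) + 1 := by
              exact Nat.add_le_add_right (Nat.add_le_add_right (Finset.card_union_le _ _) _) 1
      have hWcard : m * m ≤ W.card := by nlinarith [hcard, hcardle, Nat.lt_of_not_le hout, Nat.lt_of_not_le hin]
      have hWcard' : m * m ≤ Fintype.card {x // x ∈ W} := by
        rwa [Fintype.card_coe]
      obtain ⟨s, hsc, hsind⟩ := ih (V := {x // x ∈ W}) (fun a b => E a.1 b.1)
        (fun a b h => hor a.1 b.1 h)
        (by rintro ⟨a, b, c, h1, h2, h3⟩; exact hL3 ⟨a.1, b.1, c.1, h1, h2, h3⟩)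
        hWcard'
      refine ⟨insert v (s.image Subtype.val), ?_, ?_⟩
      · have hvnot : v ∉ s.image Subtype.val := by
          simp only [Finset.mem_image]
          rintro ⟨⟨a, ha⟩, _, hav⟩
          exact ((Finset.mem_filter.mp ha).2.1 hav)
        rw [Finset.card_insert_of_notMem hvnot,
          Finset.card_image_of_injective _ Subtype.val_injective, hsc]
      · intro x hx y hy hxy
        rcases Finset.mem_insert.mp hx with rfl | hx' <;>
          rcases Finset.mem_insert.mp hy with hy0 | hy'
        · subst hy0
          exact hor _ _ hxy hxy
        · obtain ⟨⟨b, hb⟩, _, rfl⟩ := Finset.mem_image.mp hy'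
          exact (Finset.mem_filter.mp hb).2.2.1 hxy
        · subst hy0
          obtain ⟨⟨a, ha⟩, _, rfl⟩ := Finset.mem_image.mp hx'
          exact (Finset.mem_filter.mp ha).2.2.2 hxy
        · obtain ⟨⟨a, ha⟩, has, rfl⟩ := Finset.mem_image.mp hx'
          obtain ⟨⟨b, hb⟩, hbs, rfl⟩ := Finset.mem_image.mp hy'
          exact hsind ⟨a, ha⟩ has ⟨b, hb⟩ hbs hxy

theorem stmt3 {V : Type*} [Fintype V] (E : V → V → Prop) (m : ℕ)
    (hcard : Fintype.card V = m * m)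
    (hor : IsOriented E)
    (hL3 : ¬ ∃ a b c : V, E a b ∧ E b c ∧ E a c) :
    HasIndep E m := by
  exact stmt3_aux m E hor hL3 hcard.ge
end

section
/- Every tournament on 2^{n−1} vertices contains a transitive subtournament on n vertices. -/
open Finset

def IsSemicomplete {V : Type*} (E : V → V → Prop) : Prop :=
  ∀ x y, x ≠ y → E x y ∨ E y x

section
variable {V : Type*} {E : V → V → Prop}

theorem IsOriented.flip (hor : IsOriented E) : IsOriented (flip E) :=
  fun x y hxy hyx => hor x y hyx hxy

theorem IsOriented.restrict (hor : IsOriented E) (p : V → Prop) :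
    IsOriented fun a b : Subtype p => E a b :=
  fun a b => hor a b

theorem IsSemicomplete.flip (htour : IsSemicomplete E) : IsSemicomplete (flip E) :=
  fun x y hxy => (htour x y hxy).symm

theorem IsSemicomplete.restrict (htour : IsSemicomplete E) (p : V → Prop) :
    IsSemicomplete fun a b : Subtype p => E a b :=
  fun a b hab => htour a b (Subtype.val_injective.ne hab)

theorem hasTransTour_zero (E : V → V → Prop) : HasTransTour E 0 :=
  ⟨Function.Embedding.ofIsEmpty, fun i => i.elim0⟩

theorem HasTransTour.of_flip {n : ℕ} (h : HasTransTour (flip E) n) : HasTransTour E n := by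
  obtain ⟨f, hf⟩ := h
  exact ⟨Fin.revPerm.toEmbedding.trans f, fun i j hij => hf j.rev i.rev (Fin.rev_lt_rev.mpr hij)⟩

theorem HasTransTour.cons (hor : IsOriented E) {x : V} {n : ℕ}
    (h : HasTransTour (fun a b : {y // E x y} => E a b) n) : HasTransTour E (n + 1) := by
  obtain ⟨f, hf⟩ := h
  have hinj : Function.Injective (Fin.cons x (Subtype.val ∘ f) : Fin (n + 1) → V) :=
    Fin.cons_injective_iff.mpr
      ⟨fun ⟨i, hi⟩ => by
        have hxx := (f i).2
        rw [Function.comp_apply] at hi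
        rw [hi] at hxx
        exact hor x x hxx hxx,
        Subtype.val_injective.comp f.injective⟩
  refine ⟨⟨_, hinj⟩, Fin.cases (fun j hj => ?_) fun i => Fin.cases (fun h => ?_) fun j hij => ?_⟩
  · obtain ⟨j, rfl⟩ := Fin.exists_succ_eq.mpr hj.ne'
    exact (f j).2
  · exact absurd h (Fin.not_lt_zero _)
  · exact hf i j (Fin.succ_lt_succ_iff.mp hij)

theorem nat_card_le_one_add_out_add_in [Finite V] (htour : IsSemicomplete E)
    (x : V) : Nat.card V ≤ 1 + Nat.card {y // E x y} + Nat.card {y // E y x} := by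
  classical
  have := Fintype.ofFinite V
  simp only [Nat.card_eq_fintype_card, Fintype.card_subtype]
  set A : Finset V := {y | E x y}
  set B : Finset V := {y | E y x}
  have hcover : (univ : Finset V) ⊆ insert x (A ∪ B) := by
    intro y _
    rcases eq_or_ne x y with rfl | hne
    · exact mem_insert_self _ _
    · exact mem_insert_of_mem (by simpa [A, B] using htour x y hne)
  calc Fintype.card V ≤ #(insert x (A ∪ B)) := card_le_card hcover
    _ ≤ #(A ∪ B) + 1 := card_insert_le _ _
    _ ≤ _ := by grw [card_union_le]; omega

theorem hasTransTour_succ_of_two_pow_le_card [Finite V] (hor : IsOriented E)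
    (htour : IsSemicomplete E) {n : ℕ} (hcard : 2 ^ n ≤ Nat.card V) :
    HasTransTour E (n + 1) := by
  induction n generalizing V with
  | zero =>
    obtain ⟨x⟩ : Nonempty V := (Nat.card_pos_iff.mp hcard).1
    exact (hasTransTour_zero _).cons hor (x := x)
  | succ n ih =>
    obtain ⟨x⟩ : Nonempty V := (Nat.card_pos_iff.mp (Nat.one_le_two_pow.trans hcard)).1
    wlog hout : 2 ^ n ≤ Nat.card {y // E x y} generalizing E
    · have hsplit := nat_card_le_one_add_out_add_in htour x
      rw [pow_succ] at hcard
      have hin : 2 ^ n ≤ Nat.card {y // E y x} := by omega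
      exact (this hor.flip htour.flip hin).of_flip
    exact (ih (hor.restrict _) (htour.restrict _) hout).cons hor
end

theorem stmt4 {V : Type*} [Fintype V] (E : V → V → Prop) (n : ℕ)
    (hcard : Fintype.card V = 2 ^ (n - 1))
    (hor : IsOriented E)
    (htour : ∀ x y : V, x ≠ y → E x y ∨ E y x) :
    HasTransTour E n := by
  cases n with
  | zero => exact hasTransTour_zero E
  | succ n => exact hasTransTour_succ_of_two_pow_le_card hor htour (by simp [hcard])
end

section
/- Every oriented graph on 8 vertices that contains no independent set of size 3 and no transitive tournament on 3 vertices is 4-regular: every vertex has in-degree 2 and out-degree 2. -/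
theorem stmt6 {V : Type*} [Fintype V] (E : V → V → Prop)
    (hcard : Fintype.card V = 8)
    (hor : IsOriented E)
    (hI3 : ¬ HasIndep E 3)
    (hL3 : ¬ ∃ a b c : V, E a b ∧ E b c ∧ E a c) (v : V) :
    Nat.card {w : V // E w v} = 2 ∧ Nat.card {w : V // E v w} = 2 := by
  classical
  -- a vertex with two out-neighbors that are adjacent gives a transitive triangle
  have key : ∀ x y z : V, E x y → E x z → (E y z ∨ E z y) → False := by
    rintro x y z hxy hxz (h | h)
    · exact hL3 ⟨x, y, z, hxy, h, hxz⟩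
    · exact hL3 ⟨x, z, y, hxz, h, hxy⟩
  -- a tournament on 4 vertices contains a transitive triangle
  have tourn4 : ∀ a b c d : V, E a b → (E a c ∨ E c a) → (E b c ∨ E c b) →
      (E b d ∨ E d b) → (E a d ∨ E d a) → (E c d ∨ E d c) → False := by
    intro a b c d hab hac hbc hbd had hcd
    rcases hac with hac | hca
    · exact key a b c hab hac hbc
    · rcases hbc with hbc | hcb
      · rcases hbd with hbd | hdb
        · exact key b c d hbc hbd hcd
        · rcases had with had | hda
          · exact key a b d hab had (Or.inr hdb)
          · exact key d b a hdb hda (Or.inr hab)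
      · exact key c a b hca hcb (Or.inl hab)
  set A := Finset.univ.filter (fun w => E w v) with hA
  set B := Finset.univ.filter (fun w => E v w) with hB
  set M := Finset.univ.filter (fun w => w ≠ v ∧ ¬ E v w ∧ ¬ E w v) with hM
  -- in-neighbors: at most 2
  have hAcard : A.card ≤ 2 := by
    by_contra h
    push_neg at h
    obtain ⟨t, hts, htc⟩ := Finset.exists_subset_card_eq h
    apply hI3
    refine ⟨t, htc, ?_⟩
    intro x hx y hy hxy
    have hxv : E x v := by
      have := hts hx; rw [hA, Finset.mem_filter] at this; exact this.2
    have hyv : E y v := by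
      have := hts hy; rw [hA, Finset.mem_filter] at this; exact this.2
    exact hL3 ⟨x, y, v, hxy, hyv, hxv⟩
  -- out-neighbors: at most 2
  have hBcard : B.card ≤ 2 := by
    by_contra h
    push_neg at h
    obtain ⟨t, hts, htc⟩ := Finset.exists_subset_card_eq h
    apply hI3
    refine ⟨t, htc, ?_⟩
    intro x hx y hy hxy
    have hvx : E v x := by
      have := hts hx; rw [hB, Finset.mem_filter] at this; exact this.2
    have hvy : E v y := by
      have := hts hy; rw [hB, Finset.mem_filter] at this; exact this.2
    exact hL3 ⟨v, x, y, hvx, hxy, hvy⟩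
  -- non-neighbors form a tournament
  have hMtour : ∀ x ∈ M, ∀ y ∈ M, x ≠ y → E x y ∨ E y x := by
    intro x hx y hy hxy
    rw [hM, Finset.mem_filter] at hx hy
    by_contra h
    push_neg at h
    apply hI3
    refine ⟨{v, x, y}, ?_, ?_⟩
    · rw [Finset.card_insert_of_notMem, Finset.card_insert_of_notMem,
        Finset.card_singleton]
      · simp [hxy]
      · simp only [Finset.mem_insert, Finset.mem_singleton]
        push_neg
        exact ⟨fun hh => hx.2.1 hh.symm, fun hh => hy.2.1 hh.symm⟩
    · intro p hp q hq
      simp only [Finset.mem_insert, Finset.mem_singleton] at hp hq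
      have hself : ∀ z : V, ¬ E z z := fun z hz => hor z z hz hz
      rcases hp with rfl | rfl | rfl <;> rcases hq with rfl | rfl | rfl
      · exact hself _
      · exact hx.2.2.1
      · exact hy.2.2.1
      · exact hx.2.2.2
      · exact hself _
      · exact h.1
      · exact hy.2.2.2
      · exact h.2
      · exact hself _
  -- non-neighbors: at most 3
  have hMcard : M.card ≤ 3 := by
    by_contra h
    push_neg at h
    obtain ⟨t, hts, htc⟩ := Finset.exists_subset_card_eq h
    obtain ⟨a, ha⟩ : t.Nonempty := Finset.card_pos.mp (by omega)
    have herase : (t.erase a).card = 3 := by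
      rw [Finset.card_erase_of_mem ha, htc]
    obtain ⟨b, c, d, hbc, hbd, hcd, habcd⟩ := Finset.card_eq_three.mp herase
    have hb : b ∈ t.erase a := by rw [habcd]; simp
    have hc : c ∈ t.erase a := by rw [habcd]; simp
    have hd : d ∈ t.erase a := by rw [habcd]; simp
    have hab : a ≠ b := fun hh => (Finset.mem_erase.mp hb).1 hh.symm
    have hac : a ≠ c := fun hh => (Finset.mem_erase.mp hc).1 hh.symm
    have had : a ≠ d := fun hh => (Finset.mem_erase.mp hd).1 hh.symm
    have haM : a ∈ M := hts ha
    have hbM : b ∈ M := hts (Finset.mem_of_mem_erase hb)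
    have hcM : c ∈ M := hts (Finset.mem_of_mem_erase hc)
    have hdM : d ∈ M := hts (Finset.mem_of_mem_erase hd)
    rcases hMtour a haM b hbM hab with h1 | h1
    · exact tourn4 a b c d h1 (hMtour a haM c hcM hac) (hMtour b hbM c hcM hbc)
        (hMtour b hbM d hdM hbd) (hMtour a haM d hdM had) (hMtour c hcM d hdM hcd)
    · exact tourn4 b a c d h1 (hMtour b hbM c hcM hbc) (hMtour a haM c hcM hac)
        (hMtour a haM d hdM had) (hMtour b hbM d hdM hbd) (hMtour c hcM d hdM hcd)
  -- partition of the vertex set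
  have hvA : v ∉ A := by
    rw [hA, Finset.mem_filter]
    exact fun hh => hor v v hh.2 hh.2
  have hvB : v ∉ B := by
    rw [hB, Finset.mem_filter]
    exact fun hh => hor v v hh.2 hh.2
  have hdAB : Disjoint A B := by
    rw [Finset.disjoint_left]
    intro w hw hw'
    rw [hA, Finset.mem_filter] at hw
    rw [hB, Finset.mem_filter] at hw'
    exact hor v w hw'.2 hw.2
  have hunion : insert v (A ∪ B ∪ M) = (Finset.univ : Finset V) := by
    ext w
    simp only [Finset.mem_insert, Finset.mem_union, hA, hB, hM, Finset.mem_filter,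
      Finset.mem_univ, true_and, iff_true]
    by_cases h1 : w = v
    · exact Or.inl h1
    · by_cases h2 : E w v
      · exact Or.inr (Or.inl (Or.inl h2))
      · by_cases h3 : E v w
        · exact Or.inr (Or.inl (Or.inr h3))
        · exact Or.inr (Or.inr ⟨h1, h3, h2⟩)
  have hdM : Disjoint (A ∪ B) M := by
    rw [Finset.disjoint_left]
    intro w hw hw'
    rw [hM, Finset.mem_filter] at hw'
    rcases Finset.mem_union.mp hw with h1 | h1
    · rw [hA, Finset.mem_filter] at h1
      exact hw'.2.2.2 h1.2
    · rw [hB, Finset.mem_filter] at h1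
      exact hw'.2.2.1 h1.2
  have hvM : v ∉ A ∪ B ∪ M := by
    simp only [Finset.mem_union]
    rintro ((h1 | h1) | h1)
    · exact hvA h1
    · exact hvB h1
    · rw [hM, Finset.mem_filter] at h1
      exact h1.2.1 rfl
  have hcount : 1 + (A.card + B.card + M.card) = 8 := by
    have h8 : (Finset.univ : Finset V).card = 8 := by
      rw [Finset.card_univ, hcard]
    rw [← hunion, Finset.card_insert_of_notMem hvM,
      Finset.card_union_of_disjoint hdM, Finset.card_union_of_disjoint hdAB] at h8
    omega
  have hAeq : A.card = 2 := by omega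
  have hBeq : B.card = 2 := by omega
  constructor
  · rw [Nat.card_eq_fintype_card, Fintype.card_subtype]
    exact hAeq
  · rw [Nat.card_eq_fintype_card, Fintype.card_subtype]
    exact hBeq
end

section
/- In an oriented graph on 8 vertices with no independent set of size 3 and no transitive tournament on 3 vertices, every set of 6 vertices contains three mutually adjacent vertices (a triangle in the underlying undirected graph). -/
theorem stmt7 {V : Type*} [Fintype V] (E : V → V → Prop)
    (hcard : Fintype.card V = 8)
    (hor : IsOriented E)
    (hI3 : ¬ HasIndep E 3)
    (hL3 : ¬ ∃ a b c : V, E a b ∧ E b c ∧ E a c) :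
    ∀ s : Finset V, s.card = 6 →
      ∃ a ∈ s, ∃ b ∈ s, ∃ c ∈ s, a ≠ b ∧ a ≠ c ∧ b ≠ c ∧
        (E a b ∨ E b a) ∧ (E a c ∨ E c a) ∧ (E b c ∨ E c b) := by
  classical
  intro s hs
  have self : ∀ z : V, ¬ E z z := fun z h => hor z z h h
  set A : V → V → Prop := fun x y => E x y ∨ E y x with hA
  have hindep : ∀ a b c : V, a ≠ b → a ≠ c → b ≠ c →
      ¬ A a b → ¬ A a c → ¬ A b c → False := by
    intro a b c hab hac hbc nab nac nbc
    apply hI3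
    refine ⟨{a, b, c}, ?_, ?_⟩
    · rw [Finset.card_insert_of_notMem (by simp [hab, hac]),
        Finset.card_insert_of_notMem (by simp [hbc]), Finset.card_singleton]
    · intro x hx y hy
      simp only [Finset.mem_insert, Finset.mem_singleton] at hx hy
      rcases hx with rfl | rfl | rfl <;> rcases hy with rfl | rfl | rfl <;>
        first
        | exact self _
        | exact fun h => nab (Or.inl h)
        | exact fun h => nab (Or.inr h)
        | exact fun h => nac (Or.inl h)
        | exact fun h => nac (Or.inr h)
        | exact fun h => nbc (Or.inl h)
        | exact fun h => nbc (Or.inr h)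
  obtain ⟨v, hv⟩ : ∃ v, v ∈ s := Finset.card_pos.mp (by omega)
  set t : Finset V := s.erase v with ht
  have htcard : t.card = 5 := by
    rw [ht, Finset.card_erase_of_mem hv, hs]
  have hsplit := Finset.card_filter_add_card_filter_not
    (s := t) (p := fun x => A v x)
  rw [htcard] at hsplit
  have hcases : 3 ≤ (t.filter (fun x => A v x)).card ∨
      3 ≤ (t.filter (fun x => ¬ A v x)).card := by omega
  rcases hcases with hc | hc
  · obtain ⟨u, hu, hucard⟩ := Finset.exists_subset_card_eq hc
    obtain ⟨a, b, c, hab, hac, hbc, rfl⟩ := Finset.card_eq_three.mp hucard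
    have ha := hu (by simp : a ∈ ({a, b, c} : Finset V))
    have hb := hu (by simp : b ∈ ({a, b, c} : Finset V))
    have hcc := hu (by simp : c ∈ ({a, b, c} : Finset V))
    rw [Finset.mem_filter] at ha hb hcc
    have hva : v ≠ a := fun h => (Finset.mem_erase.mp ha.1).1 h.symm
    have hvb : v ≠ b := fun h => (Finset.mem_erase.mp hb.1).1 h.symm
    have hvc : v ≠ c := fun h => (Finset.mem_erase.mp hcc.1).1 h.symm
    have has : a ∈ s := (Finset.mem_erase.mp ha.1).2
    have hbs : b ∈ s := (Finset.mem_erase.mp hb.1).2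
    have hcs : c ∈ s := (Finset.mem_erase.mp hcc.1).2
    by_cases h1 : A a b
    · exact ⟨v, hv, a, has, b, hbs, hva, hvb, hab, ha.2, hb.2, h1⟩
    by_cases h2 : A a c
    · exact ⟨v, hv, a, has, c, hcs, hva, hvc, hac, ha.2, hcc.2, h2⟩
    by_cases h3 : A b c
    · exact ⟨v, hv, b, hbs, c, hcs, hvb, hvc, hbc, hb.2, hcc.2, h3⟩
    exact absurd (hindep a b c hab hac hbc h1 h2 h3) (fun h => h)
  · obtain ⟨u, hu, hucard⟩ := Finset.exists_subset_card_eq hc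
    obtain ⟨a, b, c, hab, hac, hbc, rfl⟩ := Finset.card_eq_three.mp hucard
    have ha := hu (by simp : a ∈ ({a, b, c} : Finset V))
    have hb := hu (by simp : b ∈ ({a, b, c} : Finset V))
    have hcc := hu (by simp : c ∈ ({a, b, c} : Finset V))
    rw [Finset.mem_filter] at ha hb hcc
    have hva : v ≠ a := fun h => (Finset.mem_erase.mp ha.1).1 h.symm
    have hvb : v ≠ b := fun h => (Finset.mem_erase.mp hb.1).1 h.symm
    have hvc : v ≠ c := fun h => (Finset.mem_erase.mp hcc.1).1 h.symm
    have has : a ∈ s := (Finset.mem_erase.mp ha.1).2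
    have hbs : b ∈ s := (Finset.mem_erase.mp hb.1).2
    have hcs : c ∈ s := (Finset.mem_erase.mp hcc.1).2
    have h1 : A a b := by
      by_contra h
      exact hindep v a b hva hvb hab ha.2 hb.2 h
    have h2 : A a c := by
      by_contra h
      exact hindep v a c hva hvc hac ha.2 hcc.2 h
    have h3 : A b c := by
      by_contra h
      exact hindep v b c hvb hvc hbc hb.2 hcc.2 h
    exact ⟨a, has, b, hbs, c, hcs, hab, hac, hbc, h1, h2, h3⟩
end

section
/- Up to isomorphism, there is exactly one oriented graph on 8 vertices containing no independent set of size 3 and no transitive tournament on 3 vertices; it is the circulant oriented graph on Z/8Z with edges x → x+1 and x → x−2. -/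
/-- The circulant oriented graph on ℤ/8ℤ with connection set {+1, −2}. -/
def Ecirc (x y : ZMod 8) : Prop := y - x = 1 ∨ y - x = 6

instance : ∀ x y, Decidable (Ecirc x y) := fun x y =>
  decidable_of_iff (y - x = 1 ∨ y - x = 6) Iff.rfl

private lemma lem3 {V : Type} (E : V → V → Prop)
    (asym : ∀ x y, E x y → ¬E y x)
    (noTT : ∀ p q r, E p q → E q r → E p r → False)
    (noI3 : ∀ p q r, p ≠ q → p ≠ r → q ≠ r → ¬E p q → ¬E q p → ¬E p r → ¬E r p →
      ¬E q r → ¬E r q → False)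
    (IN2 : ∀ v, ∃ p q, p ≠ q ∧ E p v ∧ E q v)
    (OUTpin : ∀ v w, E v w → ∃ t, t ≠ w ∧ E v t ∧ ∀ s, E v s → s = w ∨ s = t)
    (INpin : ∀ v w, E w v → ∃ t, t ≠ w ∧ E t v ∧ ∀ s, E s v → s = w ∨ s = t)
    (v0 A B C D u su pu : V)
    (hA : E v0 A) (hB : E v0 B) (hC : E C v0) (hD : E D v0)
    (nAB : ¬E A B) (nBA : ¬E B A) (nCD : ¬E C D) (nDC : ¬E D C)
    (cy1 : E u su) (cy2 : E su pu) (cy3 : E pu u)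
    (nv0u : ¬E v0 u) (nuv0 : ¬E u v0) (nv0su : ¬E v0 su) (nsuv0 : ¬E su v0)
    (nv0pu : ¬E v0 pu) (npuv0 : ¬E pu v0)
    (dAB : A ≠ B) (dCD : C ≠ D) (dusu : u ≠ su) (dupu : u ≠ pu) (dsupu : su ≠ pu)
    (hexh : ∀ t, t = v0 ∨ t = A ∨ t = B ∨ t = C ∨ t = D ∨ t = u ∨ t = su ∨ t = pu)
    (hBu : E B u) (huD : E u D) :
    ∃ e : V ≃ ZMod 8, ∀ p q, E p q ↔ Ecirc (e p) (e q) := by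
  classical
  have irrefl : ∀ x, ¬E x x := fun x h => asym x x h h
  -- distinctness
  have dv0A : v0 ≠ A := by rintro rfl; exact irrefl _ hA
  have dv0B : v0 ≠ B := by rintro rfl; exact irrefl _ hB
  have dv0C : v0 ≠ C := by rintro rfl; exact irrefl _ hC
  have dv0D : v0 ≠ D := by rintro rfl; exact irrefl _ hD
  have dv0u : v0 ≠ u := by rintro rfl; exact nv0su cy1
  have dv0su : v0 ≠ su := by rintro rfl; exact nv0pu cy2
  have dv0pu : v0 ≠ pu := by rintro rfl; exact nv0u cy3
  have dAC : A ≠ C := by rintro rfl; exact asym _ _ hA hC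
  have dAD : A ≠ D := by rintro rfl; exact asym _ _ hA hD
  have dBC : B ≠ C := by rintro rfl; exact asym _ _ hB hC
  have dBD : B ≠ D := by rintro rfl; exact asym _ _ hB hD
  have dAu : A ≠ u := by rintro rfl; exact nv0u hA
  have dAsu : A ≠ su := by rintro rfl; exact nv0su hA
  have dApu : A ≠ pu := by rintro rfl; exact nv0pu hA
  have dBu : B ≠ u := by rintro rfl; exact nv0u hB
  have dBsu : B ≠ su := by rintro rfl; exact nv0su hB
  have dBpu : B ≠ pu := by rintro rfl; exact nv0pu hB
  have dCu : C ≠ u := by rintro rfl; exact nuv0 hC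
  have dCsu : C ≠ su := by rintro rfl; exact nsuv0 hC
  have dCpu : C ≠ pu := by rintro rfl; exact npuv0 hC
  have dDu : D ≠ u := by rintro rfl; exact nuv0 hD
  have dDsu : D ≠ su := by rintro rfl; exact nsuv0 hD
  have dDpu : D ≠ pu := by rintro rfl; exact npuv0 hD
  -- step 1 : in-pin at u
  obtain ⟨iu, hiune, hiu, hupin0⟩ := INpin u B hBu
  have : pu = B ∨ pu = iu := hupin0 pu cy3
  rcases this with h | h
  · exact absurd h.symm dBpu
  subst h
  -- hupin0 : ∀ s, E s u → s = B ∨ s = pu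
  -- step 2 : out-pin at u
  obtain ⟨ou, houne, huou, hupinO0⟩ := OUTpin u su cy1
  rcases hupinO0 D huD with h | h
  · exact absurd h dDsu
  subst h
  have pinu : ∀ s, E u s → s = su ∨ s = D := hupinO0
  -- step 3
  have nsuD : ¬E su D := fun h => noTT u su D cy1 h huD
  have nDsu : ¬E D su := fun h => noTT u D su huD h cy1
  -- step 4
  have npuB : ¬E pu B := fun h => noTT pu B u h hBu cy3
  have nBpu : ¬E B pu := fun h => noTT B pu u h cy3 hBu
  -- step 5 : second in-neighbor of B is su
  obtain ⟨tB, htBne, htBB, pinInB⟩ := INpin B v0 hB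
  have esuB : E su B := by
    rcases hexh tB with h | h | h | h | h | h | h | h
    · exact absurd h htBne
    · rw [h] at htBB; exact absurd htBB nAB
    · rw [h] at htBB; exact absurd htBB (irrefl B)
    · rw [h] at htBB; exact absurd htBB (fun h' => noTT C v0 B hC hB h')
    · rw [h] at htBB; exact absurd htBB (fun h' => noTT D v0 B hD hB h')
    · rw [h] at htBB
      rcases pinu B htBB with h' | h'
      · exact absurd h' dBsu
      · exact absurd h' dBD
    · rw [h] at htBB; exact htBB
    · rw [h] at htBB; exact absurd htBB npuB
  -- step 6 : out-pin at su
  obtain ⟨osu, hosune, hsuosu, pinsu0⟩ := OUTpin su pu cy2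
  rcases pinsu0 B esuB with h | h
  · exact absurd h dBpu
  subst h
  have pinsu : ∀ s, E su s → s = pu ∨ s = B := pinsu0
  -- step 7 : second in-neighbor of A is pu
  obtain ⟨tA, htAne, htAA, pinInA⟩ := INpin A v0 hA
  have epuA : E pu A := by
    rcases hexh tA with h | h | h | h | h | h | h | h
    · exact absurd h htAne
    · rw [h] at htAA; exact absurd htAA (irrefl A)
    · rw [h] at htAA; exact absurd htAA nBA
    · rw [h] at htAA; exact absurd htAA (fun h' => noTT C v0 A hC hA h')
    · rw [h] at htAA; exact absurd htAA (fun h' => noTT D v0 A hD hA h')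
    · rw [h] at htAA
      rcases pinu A htAA with h' | h'
      · exact absurd h' dAsu
      · exact absurd h' dAD
    · rw [h] at htAA
      rcases pinsu A htAA with h' | h'
      · exact absurd h' dApu
      · exact absurd h' dAB
    · rw [h] at htAA; exact htAA
  -- step 8 : out-pin at pu
  obtain ⟨opu, hopune, hpuopu, pinpu0⟩ := OUTpin pu u cy3
  rcases pinpu0 A epuA with h | h
  · exact absurd h dAu
  subst h
  have pinpu : ∀ s, E pu s → s = u ∨ s = A := pinpu0
  -- step 9 : in(C) = {A, B}
  have hinC : ∀ s, E s C → s = A ∨ s = B := by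
    intro s hs
    rcases hexh s with h | h | h | h | h | h | h | h
    · rw [h] at hs; exact absurd hs (asym _ _ hC)
    · exact Or.inl h
    · exact Or.inr h
    · rw [h] at hs; exact absurd hs (irrefl C)
    · rw [h] at hs; exact absurd hs nDC
    · rw [h] at hs
      rcases pinu C hs with h' | h'
      · exact absurd h' dCsu
      · exact absurd h' dCD
    · rw [h] at hs
      rcases pinsu C hs with h' | h'
      · exact absurd h' dCpu
      · exact absurd h' dBC.symm
    · rw [h] at hs
      rcases pinpu C hs with h' | h'
      · exact absurd h' dCu
      · exact absurd h' dAC.symm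
  obtain ⟨p, q, hpq, hpC, hqC⟩ := IN2 C
  have eAC : E A C ∧ E B C := by
    rcases hinC p hpC with rfl | rfl <;> rcases hinC q hqC with rfl | rfl
    · exact absurd rfl hpq
    · exact ⟨hpC, hqC⟩
    · exact ⟨hqC, hpC⟩
    · exact absurd rfl hpq
  obtain ⟨eAC, eBC⟩ := eAC
  -- step 10 : out-pin at B
  obtain ⟨oB, hoBne, hBoB, pinB0⟩ := OUTpin B u hBu
  rcases pinB0 C eBC with h | h
  · exact absurd h dCu
  subst h
  have pinB : ∀ s, E B s → s = u ∨ s = C := pinB0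
  -- step 11 : in(D) ⊆ {A, u} and eAD
  have hinD : ∀ s, E s D → s = A ∨ s = u := by
    intro s hs
    rcases hexh s with h | h | h | h | h | h | h | h
    · rw [h] at hs; exact absurd hs (asym _ _ hD)
    · exact Or.inl h
    · rw [h] at hs
      rcases pinB D hs with h' | h'
      · exact absurd h' dDu
      · exact absurd h' dCD.symm
    · rw [h] at hs; exact absurd hs nCD
    · rw [h] at hs; exact absurd hs (irrefl D)
    · exact Or.inr h
    · rw [h] at hs; exact absurd hs nsuD
    · rw [h] at hs
      rcases pinpu D hs with h' | h'
      · exact absurd h' dDu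
      · exact absurd h' dAD.symm
  obtain ⟨p', q', hpq', hpD, hqD⟩ := IN2 D
  have eAD : E A D := by
    rcases hinD p' hpD with rfl | rfl <;> rcases hinD q' hqD with rfl | rfl
    · exact absurd rfl hpq'
    · exact hpD
    · exact hqD
    · exact absurd rfl hpq'
  -- step 12 : out-pin at A
  obtain ⟨oA, hoAne, hAoA, pinA0⟩ := OUTpin A C eAC
  rcases pinA0 D eAD with h | h
  · exact absurd h dCD.symm
  subst h
  have pinA : ∀ s, E A s → s = C ∨ s = D := pinA0
  -- step 13 : out-pin at D, eDpu
  obtain ⟨sD, hsDne, hDsD, pinD0⟩ := OUTpin D v0 hD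
  have eDpu : E D pu := by
    rcases hexh sD with h | h | h | h | h | h | h | h
    · exact absurd h hsDne
    · rw [h] at hDsD; exact absurd hDsD (fun h' => noTT D v0 A hD hA h')
    · rw [h] at hDsD; exact absurd hDsD (fun h' => noTT D v0 B hD hB h')
    · rw [h] at hDsD; exact absurd hDsD nDC
    · rw [h] at hDsD; exact absurd hDsD (irrefl D)
    · rw [h] at hDsD
      rcases hupin0 D hDsD with h' | h'
      · exact absurd h' dBD.symm
      · exact absurd h' dDpu
    · rw [h] at hDsD; exact absurd hDsD nDsu
    · rw [h] at hDsD; exact hDsD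
  rcases pinD0 pu eDpu with h | h
  · exact absurd h dv0pu.symm
  subst h
  have pinD : ∀ s, E D s → s = v0 ∨ s = pu := pinD0
  -- step 14 : out-pin at C, eCsu
  obtain ⟨sC, hsCne, hCsC, pinC0⟩ := OUTpin C v0 hC
  have eCsu : E C su := by
    rcases hexh sC with h | h | h | h | h | h | h | h
    · exact absurd h hsCne
    · rw [h] at hCsC; exact absurd hCsC (fun h' => noTT C v0 A hC hA h')
    · rw [h] at hCsC; exact absurd hCsC (fun h' => noTT C v0 B hC hB h')
    · rw [h] at hCsC; exact absurd hCsC (irrefl C)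
    · rw [h] at hCsC; exact absurd hCsC nCD
    · rw [h] at hCsC
      rcases hupin0 C hCsC with h' | h'
      · exact absurd h' dBC.symm
      · exact absurd h' dCpu
    · rw [h] at hCsC; exact hCsC
    · rw [h] at hCsC
      exfalso
      have nsuC : ¬E su C := fun h' => noTT su C pu h' hCsC cy2
      have nCsu : ¬E C su := fun h' => noTT C su pu h' cy2 hCsC
      exact noI3 su D C dDsu.symm dCsu.symm dCD.symm nsuD nDsu nsuC nCsu nDC nCD
  rcases pinC0 su eCsu with h | h
  · exact absurd h dv0su.symm
  subst h
  have pinC : ∀ s, E C s → s = v0 ∨ s = su := pinC0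
  -- remaining non-adjacency facts
  have nAu : ¬E A u := by
    intro h; rcases pinA u h with h' | h'
    · exact dCu h'.symm
    · exact dDu h'.symm
  have nuA : ¬E u A := by
    intro h; rcases pinu A h with h' | h'
    · exact dAsu h'
    · exact dAD h'
  have nAsu : ¬E A su := by
    intro h; rcases pinA su h with h' | h'
    · exact dCsu h'.symm
    · exact dDsu h'.symm
  have nsuA : ¬E su A := by
    intro h; rcases pinsu A h with h' | h'
    · exact dApu h'
    · exact dAB h'
  have nDB : ¬E D B := fun h => noTT D v0 B hD hB h
  have nBD : ¬E B D := by
    intro h; rcases pinB D h with h' | h'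
    · exact dDu h'
    · exact dCD h'.symm
  have npuC : ¬E pu C := by
    intro h; rcases pinpu C h with h' | h'
    · exact dCu h'
    · exact dAC h'.symm
  have nCpu : ¬E C pu := by
    intro h; rcases pinC pu h with h' | h'
    · exact dv0pu h'.symm
    · exact dsupu h'.symm
  have nuC : ¬E u C := by
    intro h; rcases pinu C h with h' | h'
    · exact dCsu h'
    · exact dCD h'
  have nCu : ¬E C u := by
    intro h; rcases pinC u h with h' | h'
    · exact dv0u h'.symm
    · exact dusu h'
  -- reversed edges
  have nAv0 : ¬E A v0 := asym _ _ hA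
  have nBv0 : ¬E B v0 := asym _ _ hB
  have nv0C : ¬E v0 C := asym _ _ hC
  have nv0D : ¬E v0 D := asym _ _ hD
  have nsuu : ¬E su u := asym _ _ cy1
  have npusu : ¬E pu su := asym _ _ cy2
  have nupu : ¬E u pu := asym _ _ cy3
  have nuB : ¬E u B := asym _ _ hBu
  have nDu : ¬E D u := asym _ _ huD
  have nCA : ¬E C A := asym _ _ eAC
  have nDA : ¬E D A := asym _ _ eAD
  have nCB : ¬E C B := asym _ _ eBC
  have nApu : ¬E A pu := asym _ _ epuA
  have nBsu : ¬E B su := asym _ _ esuB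
  have nsuC : ¬E su C := asym _ _ eCsu
  have npuD : ¬E pu D := asym _ _ eDpu
  -- diagonals
  have nv0v0 : ¬E v0 v0 := irrefl v0
  have nAA : ¬E A A := irrefl A
  have nBB : ¬E B B := irrefl B
  have nCC : ¬E C C := irrefl C
  have nDD : ¬E D D := irrefl D
  have nuu : ¬E u u := irrefl u
  have nsusu : ¬E su su := irrefl su
  have npupu : ¬E pu pu := irrefl pu
  -- construct the equivalence
  obtain ⟨e, he0, he1, he2, he3, he4, he5, he6, he7⟩ :
      ∃ e : V ≃ ZMod 8, e v0 = 0 ∧ e A = 1 ∧ e D = 2 ∧ e pu = 3 ∧ e u = 4 ∧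
        e su = 5 ∧ e B = 6 ∧ e C = 7 := by
    have hk : ∀ m : ZMod 8, m = 0 ∨ m = 1 ∨ m = 2 ∨ m = 3 ∨ m = 4 ∨ m = 5 ∨
        m = 6 ∨ m = 7 := by decide
    refine ⟨⟨fun t => if t = v0 then 0 else if t = A then 1 else if t = D then 2
        else if t = pu then 3 else if t = u then 4 else if t = su then 5
        else if t = B then 6 else 7,
      fun k => if k = 0 then v0 else if k = 1 then A else if k = 2 then D
        else if k = 3 then pu else if k = 4 then u else if k = 5 then su
        else if k = 6 then B else C, ?_, ?_⟩, ?_, ?_, ?_, ?_, ?_, ?_, ?_, ?_⟩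
    · intro t
      rcases hexh t with rfl | rfl | rfl | rfl | rfl | rfl | rfl | rfl <;>
        simp (config := { decide := true }) [dv0A, dv0B, dv0C, dv0D, dv0u, dv0su, dv0pu, dAB, dAC, dAD, dAu, dAsu, dApu, dBC, dBD, dBu, dBsu, dBpu, dCD, dCu, dCsu, dCpu, dDu, dDsu, dDpu, dusu, dupu, dsupu, Ne.symm dv0A, Ne.symm dv0B, Ne.symm dv0C, Ne.symm dv0D, Ne.symm dv0u, Ne.symm dv0su, Ne.symm dv0pu, Ne.symm dAB, Ne.symm dAC, Ne.symm dAD, Ne.symm dAu, Ne.symm dAsu, Ne.symm dApu, Ne.symm dBC, Ne.symm dBD, Ne.symm dBu, Ne.symm dBsu, Ne.symm dBpu, Ne.symm dCD, Ne.symm dCu, Ne.symm dCsu, Ne.symm dCpu, Ne.symm dDu, Ne.symm dDsu, Ne.symm dDpu, Ne.symm dusu, Ne.symm dupu, Ne.symm dsupu]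
    · intro k
      rcases hk k with rfl | rfl | rfl | rfl | rfl | rfl | rfl | rfl <;>
        simp (config := { decide := true }) [dv0A, dv0B, dv0C, dv0D, dv0u, dv0su, dv0pu, dAB, dAC, dAD, dAu, dAsu, dApu, dBC, dBD, dBu, dBsu, dBpu, dCD, dCu, dCsu, dCpu, dDu, dDsu, dDpu, dusu, dupu, dsupu, Ne.symm dv0A, Ne.symm dv0B, Ne.symm dv0C, Ne.symm dv0D, Ne.symm dv0u, Ne.symm dv0su, Ne.symm dv0pu, Ne.symm dAB, Ne.symm dAC, Ne.symm dAD, Ne.symm dAu, Ne.symm dAsu, Ne.symm dApu, Ne.symm dBC, Ne.symm dBD, Ne.symm dBu, Ne.symm dBsu, Ne.symm dBpu, Ne.symm dCD, Ne.symm dCu, Ne.symm dCsu, Ne.symm dCpu, Ne.symm dDu, Ne.symm dDsu, Ne.symm dDpu, Ne.symm dusu, Ne.symm dupu, Ne.symm dsupu]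
    all_goals
      simp (config := { decide := true }) [dv0A, dv0B, dv0C, dv0D, dv0u, dv0su, dv0pu, dAB, dAC, dAD, dAu, dAsu, dApu, dBC, dBD, dBu, dBsu, dBpu, dCD, dCu, dCsu, dCpu, dDu, dDsu, dDpu, dusu, dupu, dsupu, Ne.symm dv0A, Ne.symm dv0B, Ne.symm dv0C, Ne.symm dv0D, Ne.symm dv0u, Ne.symm dv0su, Ne.symm dv0pu, Ne.symm dAB, Ne.symm dAC, Ne.symm dAD, Ne.symm dAu, Ne.symm dAsu, Ne.symm dApu, Ne.symm dBC, Ne.symm dBD, Ne.symm dBu, Ne.symm dBsu, Ne.symm dBpu, Ne.symm dCD, Ne.symm dCu, Ne.symm dCsu, Ne.symm dCpu, Ne.symm dDu, Ne.symm dDsu, Ne.symm dDpu, Ne.symm dusu, Ne.symm dupu, Ne.symm dsupu]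
  refine ⟨e, ?_⟩
  intro p q
  rcases hexh p with rfl | rfl | rfl | rfl | rfl | rfl | rfl | rfl <;>
    rcases hexh q with rfl | rfl | rfl | rfl | rfl | rfl | rfl | rfl <;>
    simp only [he0, he1, he2, he3, he4, he5, he6, he7] <;>
    first
      | exact iff_of_true (by assumption) (by decide)
      | exact iff_of_false (by assumption) (by decide)

private lemma lem2 {V : Type} (E : V → V → Prop)
    (asym : ∀ x y, E x y → ¬E y x)
    (noTT : ∀ p q r, E p q → E q r → E p r → False)
    (noI3 : ∀ p q r, p ≠ q → p ≠ r → q ≠ r → ¬E p q → ¬E q p → ¬E p r → ¬E r p →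
      ¬E q r → ¬E r q → False)
    (IN2 : ∀ v, ∃ p q, p ≠ q ∧ E p v ∧ E q v)
    (OUTpin : ∀ v w, E v w → ∃ t, t ≠ w ∧ E v t ∧ ∀ s, E v s → s = w ∨ s = t)
    (INpin : ∀ v w, E w v → ∃ t, t ≠ w ∧ E t v ∧ ∀ s, E s v → s = w ∨ s = t)
    (v0 A B c d u su pu : V)
    (hA : E v0 A) (hB : E v0 B) (hc : E c v0) (hd : E d v0)
    (nAB : ¬E A B) (nBA : ¬E B A) (ncd : ¬E c d) (ndc : ¬E d c)
    (cy1 : E u su) (cy2 : E su pu) (cy3 : E pu u)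
    (nv0u : ¬E v0 u) (nuv0 : ¬E u v0) (nv0su : ¬E v0 su) (nsuv0 : ¬E su v0)
    (nv0pu : ¬E v0 pu) (npuv0 : ¬E pu v0)
    (dAB : A ≠ B) (dcd : c ≠ d) (dusu : u ≠ su) (dupu : u ≠ pu) (dsupu : su ≠ pu)
    (hexh : ∀ t, t = v0 ∨ t = A ∨ t = B ∨ t = c ∨ t = d ∨ t = u ∨ t = su ∨ t = pu)
    (hBu : E B u) :
    ∃ e : V ≃ ZMod 8, ∀ p q, E p q ↔ Ecirc (e p) (e q) := by
  have irrefl : ∀ x, ¬E x x := fun x h => asym x x h h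
  have dBpu : B ≠ pu := by rintro rfl; exact nv0pu hB
  have dcA : c ≠ A := by rintro rfl; exact asym _ _ hA hc
  have dcB : c ≠ B := by rintro rfl; exact asym _ _ hB hc
  have dcu : c ≠ u := by rintro rfl; exact nuv0 hc
  have dcsu : c ≠ su := by rintro rfl; exact nsuv0 hc
  have dcpu : c ≠ pu := by rintro rfl; exact npuv0 hc
  have ddA : d ≠ A := by rintro rfl; exact asym _ _ hA hd
  have ddB : d ≠ B := by rintro rfl; exact asym _ _ hB hd
  have ddu : d ≠ u := by rintro rfl; exact nuv0 hd
  have ddsu : d ≠ su := by rintro rfl; exact nsuv0 hd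
  have ddpu : d ≠ pu := by rintro rfl; exact npuv0 hd
  -- in-pin at u
  obtain ⟨iu, hiune, hiu, hupin0⟩ := INpin u B hBu
  rcases hupin0 pu cy3 with h | h
  · exact absurd h.symm dBpu
  subst h
  -- out-pin at u : classify the second out-neighbor
  obtain ⟨ou, houne, huou, hupinO⟩ := OUTpin u su cy1
  rcases hexh ou with h | h | h | h | h | h | h | h
  · rw [h] at huou; exact absurd huou nuv0
  · -- ou = A : contradiction, {u, c, d} independent
    rw [h] at huou hupinO
    exfalso
    have ncu : ¬E c u := by
      intro h'; rcases hupin0 c h' with h'' | h''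
      · exact dcB h''
      · exact dcpu h''
    have nuc : ¬E u c := by
      intro h'; rcases hupinO c h' with h'' | h''
      · exact dcsu h''
      · exact dcA h''
    have ndu : ¬E d u := by
      intro h'; rcases hupin0 d h' with h'' | h''
      · exact ddB h''
      · exact ddpu h''
    have nud : ¬E u d := by
      intro h'; rcases hupinO d h' with h'' | h''
      · exact ddsu h''
      · exact ddA h''
    exact noI3 u c d (Ne.symm dcu) (Ne.symm ddu) dcd nuc ncu nud ndu ncd ndc
  · rw [h] at huou; exact absurd huou (asym _ _ hBu)
  · -- ou = c : apply lem3 with C := d, D := c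
    rw [h] at huou
    exact lem3 E asym noTT noI3 IN2 OUTpin INpin v0 A B d c u su pu hA hB hd hc
      nAB nBA ndc ncd cy1 cy2 cy3 nv0u nuv0 nv0su nsuv0 nv0pu npuv0
      dAB (Ne.symm dcd) dusu dupu dsupu
      (fun t => by rcases hexh t with h' | h' | h' | h' | h' | h' | h' | h' <;> tauto)
      hBu huou
  · -- ou = d : apply lem3 with C := c, D := d
    rw [h] at huou
    exact lem3 E asym noTT noI3 IN2 OUTpin INpin v0 A B c d u su pu hA hB hc hd
      nAB nBA ncd ndc cy1 cy2 cy3 nv0u nuv0 nv0su nsuv0 nv0pu npuv0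
      dAB dcd dusu dupu dsupu hexh hBu huou
  · rw [h] at huou; exact absurd huou (irrefl u)
  · exact absurd h houne
  · rw [h] at huou; exact absurd huou (asym _ _ cy3)

set_option maxHeartbeats 2000000 in
private lemma lem1 {V : Type} (E : V → V → Prop)
    (asym : ∀ x y, E x y → ¬E y x)
    (noTT : ∀ p q r, E p q → E q r → E p r → False)
    (noI3 : ∀ p q r, p ≠ q → p ≠ r → q ≠ r → ¬E p q → ¬E q p → ¬E p r → ¬E r p →
      ¬E q r → ¬E r q → False)
    (IN2 : ∀ v, ∃ p q, p ≠ q ∧ E p v ∧ E q v)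
    (OUTpin : ∀ v w, E v w → ∃ t, t ≠ w ∧ E v t ∧ ∀ s, E v s → s = w ∨ s = t)
    (INpin : ∀ v w, E w v → ∃ t, t ≠ w ∧ E t v ∧ ∀ s, E s v → s = w ∨ s = t)
    (v0 a b c d x y z : V)
    (ha : E v0 a) (hb : E v0 b) (hc : E c v0) (hd : E d v0)
    (dab : a ≠ b) (dcd : c ≠ d)
    (cxy : E x y) (cyz : E y z) (czx : E z x)
    (nv0x : ¬E v0 x) (nxv0 : ¬E x v0) (nv0y : ¬E v0 y) (nyv0 : ¬E y v0)
    (nv0z : ¬E v0 z) (nzv0 : ¬E z v0)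
    (dxy : x ≠ y) (dxz : x ≠ z) (dyz : y ≠ z)
    (hexh : ∀ t, t = v0 ∨ t = a ∨ t = b ∨ t = c ∨ t = d ∨ t = x ∨ t = y ∨ t = z) :
    ∃ e : V ≃ ZMod 8, ∀ p q, E p q ↔ Ecirc (e p) (e q) := by
  have irrefl : ∀ w, ¬E w w := fun w h => asym w w h h
  have nab : ¬E a b := fun h => noTT v0 a b ha h hb
  have nba : ¬E b a := fun h => noTT v0 b a hb h ha
  have ncd : ¬E c d := fun h => noTT c d v0 h hd hc
  have ndc : ¬E d c := fun h => noTT d c v0 h hc hd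
  have dv0x : v0 ≠ x := by rintro rfl; exact nv0y cxy
  have dv0y : v0 ≠ y := by rintro rfl; exact nv0z cyz
  have dv0z : v0 ≠ z := by rintro rfl; exact nv0x czx
  have dcx : c ≠ x := by rintro rfl; exact nxv0 hc
  have dcy : c ≠ y := by rintro rfl; exact nyv0 hc
  have dcz : c ≠ z := by rintro rfl; exact nzv0 hc
  have ddx : d ≠ x := by rintro rfl; exact nxv0 hd
  have ddy : d ≠ y := by rintro rfl; exact nyv0 hd
  have ddz : d ≠ z := by rintro rfl; exact nzv0 hd
  have inCol : ∀ v p q r, E p v → E q v → E r v → p = q ∨ p = r ∨ q = r := by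
    intro v p q r hp hq hr
    by_contra hcon
    push_neg at hcon
    obtain ⟨hpq, hpr, hqr⟩ := hcon
    exact noI3 p q r hpq hpr hqr (fun h => noTT p q v h hq hp) (fun h => noTT q p v h hp hq)
      (fun h => noTT p r v h hr hp) (fun h => noTT r p v h hp hr)
      (fun h => noTT q r v h hr hq) (fun h => noTT r q v h hq hr)
  -- second out-neighbor of c
  obtain ⟨sc, hscne, hcsc, pinc⟩ := OUTpin c v0 hc
  have hsc : sc = x ∨ sc = y ∨ sc = z := by
    rcases hexh sc with h | h | h | h | h | h | h | h
    · exact absurd h hscne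
    · rw [h] at hcsc; exact absurd hcsc (fun h' => noTT c v0 a hc ha h')
    · rw [h] at hcsc; exact absurd hcsc (fun h' => noTT c v0 b hc hb h')
    · rw [h] at hcsc; exact absurd hcsc (irrefl c)
    · rw [h] at hcsc; exact absurd hcsc ncd
    · exact Or.inl h
    · exact Or.inr (Or.inl h)
    · exact Or.inr (Or.inr h)
  obtain ⟨sd, hsdne, hdsd, pind⟩ := OUTpin d v0 hd
  have hsd : sd = x ∨ sd = y ∨ sd = z := by
    rcases hexh sd with h | h | h | h | h | h | h | h
    · exact absurd h hsdne
    · rw [h] at hdsd; exact absurd hdsd (fun h' => noTT d v0 a hd ha h')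
    · rw [h] at hdsd; exact absurd hdsd (fun h' => noTT d v0 b hd hb h')
    · rw [h] at hdsd; exact absurd hdsd ndc
    · rw [h] at hdsd; exact absurd hdsd (irrefl d)
    · exact Or.inl h
    · exact Or.inr (Or.inl h)
    · exact Or.inr (Or.inr h)
  have hscsd : sc ≠ sd := by
    intro h
    rcases hsc with h' | h' | h'
    · have h1 : E c x := by rw [h'] at hcsc; exact hcsc
      have h2 : E d x := by rw [show sd = x from h.symm.trans h'] at hdsd; exact hdsd
      rcases inCol x c d z h1 h2 czx with hh | hh | hh
      · exact dcd hh
      · exact dcz hh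
      · exact ddz hh
    · have h1 : E c y := by rw [h'] at hcsc; exact hcsc
      have h2 : E d y := by rw [show sd = y from h.symm.trans h'] at hdsd; exact hdsd
      rcases inCol y c d x h1 h2 cxy with hh | hh | hh
      · exact dcd hh
      · exact dcx hh
      · exact ddx hh
    · have h1 : E c z := by rw [h'] at hcsc; exact hcsc
      have h2 : E d z := by rw [show sd = z from h.symm.trans h'] at hdsd; exact hdsd
      rcases inCol z c d y h1 h2 cyz with hh | hh | hh
      · exact dcd hh
      · exact dcy hh
      · exact ddy hh
  -- the external in-neighbor of each cycle vertex
  obtain ⟨ex, hexne, hexE, pinx⟩ := INpin x z czx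
  have hEx : E a x ∨ E b x ∨ x = sc ∨ x = sd := by
    rcases hexh ex with h | h | h | h | h | h | h | h
    · rw [h] at hexE; exact absurd hexE nv0x
    · rw [h] at hexE; exact Or.inl hexE
    · rw [h] at hexE; exact Or.inr (Or.inl hexE)
    · rw [h] at hexE
      rcases pinc x hexE with h' | h'
      · exact absurd h' (Ne.symm dv0x)
      · exact Or.inr (Or.inr (Or.inl h'))
    · rw [h] at hexE
      rcases pind x hexE with h' | h'
      · exact absurd h' (Ne.symm dv0x)
      · exact Or.inr (Or.inr (Or.inr h'))
    · rw [h] at hexE; exact absurd hexE (irrefl x)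
    · rw [h] at hexE; exact absurd hexE (asym _ _ cxy)
    · exact absurd h hexne
  obtain ⟨ey, heyne, heyE, piny⟩ := INpin y x cxy
  have hEy : E a y ∨ E b y ∨ y = sc ∨ y = sd := by
    rcases hexh ey with h | h | h | h | h | h | h | h
    · rw [h] at heyE; exact absurd heyE nv0y
    · rw [h] at heyE; exact Or.inl heyE
    · rw [h] at heyE; exact Or.inr (Or.inl heyE)
    · rw [h] at heyE
      rcases pinc y heyE with h' | h'
      · exact absurd h' (Ne.symm dv0y)
      · exact Or.inr (Or.inr (Or.inl h'))
    · rw [h] at heyE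
      rcases pind y heyE with h' | h'
      · exact absurd h' (Ne.symm dv0y)
      · exact Or.inr (Or.inr (Or.inr h'))
    · exact absurd h heyne
    · rw [h] at heyE; exact absurd heyE (irrefl y)
    · rw [h] at heyE; exact absurd heyE (asym _ _ cyz)
  obtain ⟨ez, hezne, hezE, pinz⟩ := INpin z y cyz
  have hEz : E a z ∨ E b z ∨ z = sc ∨ z = sd := by
    rcases hexh ez with h | h | h | h | h | h | h | h
    · rw [h] at hezE; exact absurd hezE nv0z
    · rw [h] at hezE; exact Or.inl hezE
    · rw [h] at hezE; exact Or.inr (Or.inl hezE)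
    · rw [h] at hezE
      rcases pinc z hezE with h' | h'
      · exact absurd h' (Ne.symm dv0z)
      · exact Or.inr (Or.inr (Or.inl h'))
    · rw [h] at hezE
      rcases pind z hezE with h' | h'
      · exact absurd h' (Ne.symm dv0z)
      · exact Or.inr (Or.inr (Or.inr h'))
    · rw [h] at hezE; exact absurd hezE (asym _ _ czx)
    · exact absurd h hezne
    · rw [h] at hezE; exact absurd hezE (irrefl z)
  -- find the out-neighbor of v0 with an edge into the cycle
  have hgu : ∃ g w, (g = a ∨ g = b) ∧ E g w ∧ (w = x ∨ w = y ∨ w = z) := by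
    rcases hEx with h | h | h | h
    · exact ⟨a, x, Or.inl rfl, h, Or.inl rfl⟩
    · exact ⟨b, x, Or.inr rfl, h, Or.inl rfl⟩
    · rcases hEy with h2 | h2 | h2 | h2
      · exact ⟨a, y, Or.inl rfl, h2, Or.inr (Or.inl rfl)⟩
      · exact ⟨b, y, Or.inr rfl, h2, Or.inr (Or.inl rfl)⟩
      · exact absurd (h.trans h2.symm) dxy
      · rcases hEz with h3 | h3 | h3 | h3
        · exact ⟨a, z, Or.inl rfl, h3, Or.inr (Or.inr rfl)⟩
        · exact ⟨b, z, Or.inr rfl, h3, Or.inr (Or.inr rfl)⟩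
        · exact absurd (h.trans h3.symm) dxz
        · exact absurd (h2.trans h3.symm) dyz
    · rcases hEy with h2 | h2 | h2 | h2
      · exact ⟨a, y, Or.inl rfl, h2, Or.inr (Or.inl rfl)⟩
      · exact ⟨b, y, Or.inr rfl, h2, Or.inr (Or.inl rfl)⟩
      · rcases hEz with h3 | h3 | h3 | h3
        · exact ⟨a, z, Or.inl rfl, h3, Or.inr (Or.inr rfl)⟩
        · exact ⟨b, z, Or.inr rfl, h3, Or.inr (Or.inr rfl)⟩
        · exact absurd (h2.trans h3.symm) dyz
        · exact absurd (h.trans h3.symm) dxz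
      · exact absurd (h.trans h2.symm) dxy
  obtain ⟨g, w, hg, hgw, hw⟩ := hgu
  rcases hg with h | h <;> rw [h] at hgw <;> rcases hw with h' | h' | h' <;> rw [h'] at hgw
  · exact lem2 E asym noTT noI3 IN2 OUTpin INpin v0 b a c d x y z hb ha hc hd nba nab ncd ndc
      cxy cyz czx nv0x nxv0 nv0y nyv0 nv0z nzv0 (Ne.symm dab) dcd dxy dxz dyz
      (fun t => by
        rcases hexh t with hh | hh | hh | hh | hh | hh | hh | hh
        exacts [Or.inl hh, Or.inr (Or.inr (Or.inl hh)), Or.inr (Or.inl hh), Or.inr (Or.inr (Or.inr (Or.inl hh))), Or.inr (Or.inr (Or.inr (Or.inr (Or.inl hh)))), Or.inr (Or.inr (Or.inr (Or.inr (Or.inr (Or.inl hh))))), Or.inr (Or.inr (Or.inr (Or.inr (Or.inr (Or.inr (Or.inl hh)))))), Or.inr (Or.inr (Or.inr (Or.inr (Or.inr (Or.inr (Or.inr (hh)))))))]) hgw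
  · exact lem2 E asym noTT noI3 IN2 OUTpin INpin v0 b a c d y z x hb ha hc hd nba nab ncd ndc
      cyz czx cxy nv0y nyv0 nv0z nzv0 nv0x nxv0 (Ne.symm dab) dcd dyz (Ne.symm dxy) (Ne.symm dxz)
      (fun t => by
        rcases hexh t with hh | hh | hh | hh | hh | hh | hh | hh
        exacts [Or.inl hh, Or.inr (Or.inr (Or.inl hh)), Or.inr (Or.inl hh), Or.inr (Or.inr (Or.inr (Or.inl hh))), Or.inr (Or.inr (Or.inr (Or.inr (Or.inl hh)))), Or.inr (Or.inr (Or.inr (Or.inr (Or.inr (Or.inr (Or.inr (hh))))))), Or.inr (Or.inr (Or.inr (Or.inr (Or.inr (Or.inl hh))))), Or.inr (Or.inr (Or.inr (Or.inr (Or.inr (Or.inr (Or.inl hh))))))]) hgw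
  · exact lem2 E asym noTT noI3 IN2 OUTpin INpin v0 b a c d z x y hb ha hc hd nba nab ncd ndc
      czx cxy cyz nv0z nzv0 nv0x nxv0 nv0y nyv0 (Ne.symm dab) dcd (Ne.symm dxz) (Ne.symm dyz) dxy
      (fun t => by
        rcases hexh t with hh | hh | hh | hh | hh | hh | hh | hh
        exacts [Or.inl hh, Or.inr (Or.inr (Or.inl hh)), Or.inr (Or.inl hh), Or.inr (Or.inr (Or.inr (Or.inl hh))), Or.inr (Or.inr (Or.inr (Or.inr (Or.inl hh)))), Or.inr (Or.inr (Or.inr (Or.inr (Or.inr (Or.inr (Or.inl hh)))))), Or.inr (Or.inr (Or.inr (Or.inr (Or.inr (Or.inr (Or.inr (hh))))))), Or.inr (Or.inr (Or.inr (Or.inr (Or.inr (Or.inl hh)))))]) hgw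
  · exact lem2 E asym noTT noI3 IN2 OUTpin INpin v0 a b c d x y z ha hb hc hd nab nba ncd ndc
      cxy cyz czx nv0x nxv0 nv0y nyv0 nv0z nzv0 dab dcd dxy dxz dyz hexh hgw
  · exact lem2 E asym noTT noI3 IN2 OUTpin INpin v0 a b c d y z x ha hb hc hd nab nba ncd ndc
      cyz czx cxy nv0y nyv0 nv0z nzv0 nv0x nxv0 dab dcd dyz (Ne.symm dxy) (Ne.symm dxz)
      (fun t => by
        rcases hexh t with hh | hh | hh | hh | hh | hh | hh | hh
        exacts [Or.inl hh, Or.inr (Or.inl hh), Or.inr (Or.inr (Or.inl hh)), Or.inr (Or.inr (Or.inr (Or.inl hh))), Or.inr (Or.inr (Or.inr (Or.inr (Or.inl hh)))), Or.inr (Or.inr (Or.inr (Or.inr (Or.inr (Or.inr (Or.inr (hh))))))), Or.inr (Or.inr (Or.inr (Or.inr (Or.inr (Or.inl hh))))), Or.inr (Or.inr (Or.inr (Or.inr (Or.inr (Or.inr (Or.inl hh))))))]) hgw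
  · exact lem2 E asym noTT noI3 IN2 OUTpin INpin v0 a b c d z x y ha hb hc hd nab nba ncd ndc
      czx cxy cyz nv0z nzv0 nv0x nxv0 nv0y nyv0 dab dcd (Ne.symm dxz) (Ne.symm dyz) dxy
      (fun t => by
        rcases hexh t with hh | hh | hh | hh | hh | hh | hh | hh
        exacts [Or.inl hh, Or.inr (Or.inl hh), Or.inr (Or.inr (Or.inl hh)), Or.inr (Or.inr (Or.inr (Or.inl hh))), Or.inr (Or.inr (Or.inr (Or.inr (Or.inl hh)))), Or.inr (Or.inr (Or.inr (Or.inr (Or.inr (Or.inr (Or.inl hh)))))), Or.inr (Or.inr (Or.inr (Or.inr (Or.inr (Or.inr (Or.inr (hh))))))), Or.inr (Or.inr (Or.inr (Or.inr (Or.inr (Or.inl hh)))))]) hgw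

set_option maxHeartbeats 2000000 in
set_option maxRecDepth 40000 in
theorem stmt8 :
    (IsOriented Ecirc ∧ ¬ HasIndep Ecirc 3 ∧
      ¬ ∃ a b c : ZMod 8, Ecirc a b ∧ Ecirc b c ∧ Ecirc a c) ∧
    ∀ (V : Type) (_ : Fintype V) (E : V → V → Prop),
      Fintype.card V = 8 → IsOriented E → ¬ HasIndep E 3 →
      (¬ ∃ a b c : V, E a b ∧ E b c ∧ E a c) →
      ∃ e : V ≃ ZMod 8, ∀ x y : V, E x y ↔ Ecirc (e x) (e y) := by
  constructor
  · refine ⟨?_, ?_, ?_⟩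
    · exact (by decide : ∀ x y : ZMod 8, Ecirc x y → ¬ Ecirc y x)
    · exact (by decide : ¬∃ s : Finset (ZMod 8), s.card = 3 ∧ ∀ x ∈ s, ∀ y ∈ s, ¬ Ecirc x y)
    · decide
  · intro V _ E hcard horient hni hnt
    classical
    have asym : ∀ x y, E x y → ¬E y x := horient
    have irrefl : ∀ x, ¬E x x := fun x h => asym x x h h
    have noTT : ∀ p q r, E p q → E q r → E p r → False :=
      fun p q r h1 h2 h3 => hnt ⟨p, q, r, h1, h2, h3⟩
    have noI3 : ∀ p q r, p ≠ q → p ≠ r → q ≠ r → ¬E p q → ¬E q p → ¬E p r → ¬E r p →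
        ¬E q r → ¬E r q → False := by
      intro p q r dpq dpr dqr n1 n2 n3 n4 n5 n6
      apply hni
      refine ⟨{p, q, r}, ?_, ?_⟩
      · rw [Finset.card_insert_of_notMem (by simp [dpq, dpr]),
          Finset.card_insert_of_notMem (by simp [dqr]), Finset.card_singleton]
      · intro s hs t ht
        simp only [Finset.mem_insert, Finset.mem_singleton] at hs ht
        rcases hs with rfl | rfl | rfl <;> rcases ht with rfl | rfl | rfl <;>
          first | exact irrefl _ | assumption
    have key : ∀ v : V,
        (Finset.univ.filter (fun u => E v u)).card = 2 ∧
        (Finset.univ.filter (fun u => E u v)).card = 2 ∧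
        (Finset.univ.filter (fun u => u ≠ v ∧ ¬E v u ∧ ¬E u v)).card = 3 := by
      intro v
      have hO : (Finset.univ.filter (fun u => E v u)).card ≤ 2 := by
        by_contra hgt
        push_neg at hgt
        obtain ⟨p1, p2, p3, hp1, hp2, hp3, d12, d13, d23⟩ := Finset.two_lt_card_iff.mp hgt
        have e1 : E v p1 := (Finset.mem_filter.mp hp1).2
        have e2 : E v p2 := (Finset.mem_filter.mp hp2).2
        have e3 : E v p3 := (Finset.mem_filter.mp hp3).2
        exact noI3 p1 p2 p3 d12 d13 d23
          (fun h => noTT v p1 p2 e1 h e2) (fun h => noTT v p2 p1 e2 h e1)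
          (fun h => noTT v p1 p3 e1 h e3) (fun h => noTT v p3 p1 e3 h e1)
          (fun h => noTT v p2 p3 e2 h e3) (fun h => noTT v p3 p2 e3 h e2)
      have hI : (Finset.univ.filter (fun u => E u v)).card ≤ 2 := by
        by_contra hgt
        push_neg at hgt
        obtain ⟨p1, p2, p3, hp1, hp2, hp3, d12, d13, d23⟩ := Finset.two_lt_card_iff.mp hgt
        have e1 : E p1 v := (Finset.mem_filter.mp hp1).2
        have e2 : E p2 v := (Finset.mem_filter.mp hp2).2
        have e3 : E p3 v := (Finset.mem_filter.mp hp3).2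
        exact noI3 p1 p2 p3 d12 d13 d23
          (fun h => noTT p1 p2 v h e2 e1) (fun h => noTT p2 p1 v h e1 e2)
          (fun h => noTT p1 p3 v h e3 e1) (fun h => noTT p3 p1 v h e1 e3)
          (fun h => noTT p2 p3 v h e3 e2) (fun h => noTT p3 p2 v h e2 e3)
      have hN : (Finset.univ.filter (fun u => u ≠ v ∧ ¬E v u ∧ ¬E u v)).card ≤ 3 := by
        by_contra hgt
        push_neg at hgt
        set N := Finset.univ.filter (fun u => u ≠ v ∧ ¬E v u ∧ ¬E u v) with hNdef
        obtain ⟨w, hw⟩ : ∃ w, w ∈ N := Finset.card_pos.mp (by omega)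
        have h3 : 2 < (N.erase w).card := by
          rw [Finset.card_erase_of_mem hw]; omega
        obtain ⟨p1, p2, p3, hp1, hp2, hp3, d12, d13, d23⟩ := Finset.two_lt_card_iff.mp h3
        have hp1N := Finset.mem_of_mem_erase hp1
        have hp2N := Finset.mem_of_mem_erase hp2
        have hp3N := Finset.mem_of_mem_erase hp3
        have dw1 := Finset.ne_of_mem_erase hp1
        have dw2 := Finset.ne_of_mem_erase hp2
        have dw3 := Finset.ne_of_mem_erase hp3
        have adj : ∀ s t, s ∈ N → t ∈ N → s ≠ t → E s t ∨ E t s := by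
          intro s t hs ht hst
          by_contra hno
          push_neg at hno
          obtain ⟨hs1, hs2, hs3⟩ := (Finset.mem_filter.mp hs).2
          obtain ⟨ht1, ht2, ht3⟩ := (Finset.mem_filter.mp ht).2
          exact noI3 v s t (Ne.symm hs1) (Ne.symm ht1) hst hs2 hs3 ht2 ht3 hno.1 hno.2
        have hout : ∀ s t, s ∈ N → t ∈ N → s ≠ t → E w s → E w t → False := by
          intro s t hs ht hst h1 h2
          rcases adj s t hs ht hst with hh | hh
          · exact noTT w s t h1 hh h2
          · exact noTT w t s h2 hh h1
        have hin : ∀ s t, s ∈ N → t ∈ N → s ≠ t → E s w → E t w → False := by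
          intro s t hs ht hst h1 h2
          rcases adj s t hs ht hst with hh | hh
          · exact noTT s t w hh h2 h1
          · exact noTT t s w hh h1 h2
        rcases adj w p1 hw hp1N (Ne.symm dw1) with a1 | a1 <;>
          rcases adj w p2 hw hp2N (Ne.symm dw2) with a2 | a2 <;>
          rcases adj w p3 hw hp3N (Ne.symm dw3) with a3 | a3
        · exact hout p1 p2 hp1N hp2N d12 a1 a2
        · exact hout p1 p2 hp1N hp2N d12 a1 a2
        · exact hout p1 p3 hp1N hp3N d13 a1 a3
        · exact hin p2 p3 hp2N hp3N d23 a2 a3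
        · exact hout p2 p3 hp2N hp3N d23 a2 a3
        · exact hin p1 p3 hp1N hp3N d13 a1 a3
        · exact hin p1 p2 hp1N hp2N d12 a1 a2
        · exact hin p1 p2 hp1N hp2N d12 a1 a2
      have hcover : (Finset.univ : Finset V) ⊆
          insert v ((Finset.univ.filter (fun u => E v u)) ∪
            (Finset.univ.filter (fun u => E u v)) ∪
            (Finset.univ.filter (fun u => u ≠ v ∧ ¬E v u ∧ ¬E u v))) := by
        intro t _
        simp only [Finset.mem_insert, Finset.mem_union, Finset.mem_filter, Finset.mem_univ,
          true_and]
        by_cases h1 : t = v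
        · exact Or.inl h1
        by_cases h2 : E v t
        · exact Or.inr (Or.inl (Or.inl h2))
        by_cases h3 : E t v
        · exact Or.inr (Or.inl (Or.inr h3))
        · exact Or.inr (Or.inr ⟨h1, h2, h3⟩)
      have hbig : 8 ≤ 1 + ((Finset.univ.filter (fun u => E v u)).card +
          (Finset.univ.filter (fun u => E u v)).card +
          (Finset.univ.filter (fun u => u ≠ v ∧ ¬E v u ∧ ¬E u v)).card) := by
        have c1 : (Finset.univ : Finset V).card = 8 := by rw [Finset.card_univ, hcard]
        have c2 := Finset.card_le_card hcover
        have c3 := Finset.card_insert_le v ((Finset.univ.filter (fun u => E v u)) ∪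
            (Finset.univ.filter (fun u => E u v)) ∪
            (Finset.univ.filter (fun u => u ≠ v ∧ ¬E v u ∧ ¬E u v)))
        have c4 := Finset.card_union_le ((Finset.univ.filter (fun u => E v u)) ∪
            (Finset.univ.filter (fun u => E u v)))
            (Finset.univ.filter (fun u => u ≠ v ∧ ¬E v u ∧ ¬E u v))
        have c5 := Finset.card_union_le (Finset.univ.filter (fun u => E v u))
            (Finset.univ.filter (fun u => E u v))
        omega
      exact ⟨by omega, by omega, by omega⟩
    have OUTpin : ∀ v w, E v w → ∃ t, t ≠ w ∧ E v t ∧ ∀ s, E v s → s = w ∨ s = t := by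
      intro v w hw
      obtain ⟨p, q, hpq, hOeq⟩ := Finset.card_eq_two.mp (key v).1
      have hmem : ∀ s, E v s → s = p ∨ s = q := by
        intro s hs
        have : s ∈ Finset.univ.filter (fun u => E v u) :=
          Finset.mem_filter.mpr ⟨Finset.mem_univ s, hs⟩
        rw [hOeq] at this
        simpa using this
      have hp : E v p := by
        have : p ∈ Finset.univ.filter (fun u => E v u) := by rw [hOeq]; simp
        exact (Finset.mem_filter.mp this).2
      have hq : E v q := by
        have : q ∈ Finset.univ.filter (fun u => E v u) := by rw [hOeq]; simp
        exact (Finset.mem_filter.mp this).2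
      rcases hmem w hw with h | h
      · subst h
        exact ⟨q, Ne.symm hpq, hq, hmem⟩
      · subst h
        exact ⟨p, hpq, hp, fun s hs => (hmem s hs).symm⟩
    have INpin : ∀ v w, E w v → ∃ t, t ≠ w ∧ E t v ∧ ∀ s, E s v → s = w ∨ s = t := by
      intro v w hw
      obtain ⟨p, q, hpq, hIeq⟩ := Finset.card_eq_two.mp (key v).2.1
      have hmem : ∀ s, E s v → s = p ∨ s = q := by
        intro s hs
        have : s ∈ Finset.univ.filter (fun u => E u v) :=
          Finset.mem_filter.mpr ⟨Finset.mem_univ s, hs⟩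
        rw [hIeq] at this
        simpa using this
      have hp : E p v := by
        have : p ∈ Finset.univ.filter (fun u => E u v) := by rw [hIeq]; simp
        exact (Finset.mem_filter.mp this).2
      have hq : E q v := by
        have : q ∈ Finset.univ.filter (fun u => E u v) := by rw [hIeq]; simp
        exact (Finset.mem_filter.mp this).2
      rcases hmem w hw with h | h
      · subst h
        exact ⟨q, Ne.symm hpq, hq, hmem⟩
      · subst h
        exact ⟨p, hpq, hp, fun s hs => (hmem s hs).symm⟩
    have IN2 : ∀ v, ∃ p q, p ≠ q ∧ E p v ∧ E q v := by
      intro v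
      obtain ⟨p, q, hpq, hIeq⟩ := Finset.card_eq_two.mp (key v).2.1
      have hp : E p v := by
        have : p ∈ Finset.univ.filter (fun u => E u v) := by rw [hIeq]; simp
        exact (Finset.mem_filter.mp this).2
      have hq : E q v := by
        have : q ∈ Finset.univ.filter (fun u => E u v) := by rw [hIeq]; simp
        exact (Finset.mem_filter.mp this).2
      exact ⟨p, q, hpq, hp, hq⟩
    obtain ⟨v0⟩ := Fintype.card_pos_iff.mp (show 0 < Fintype.card V by omega)
    obtain ⟨a, b, dab, hOeq⟩ := Finset.card_eq_two.mp (key v0).1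
    obtain ⟨c, d, dcd, hIeq⟩ := Finset.card_eq_two.mp (key v0).2.1
    obtain ⟨x0, y0, z0, dxy, dxz, dyz, hNeq⟩ := Finset.card_eq_three.mp (key v0).2.2
    have ha : E v0 a := by
      have : a ∈ Finset.univ.filter (fun u => E v0 u) := by rw [hOeq]; simp
      exact (Finset.mem_filter.mp this).2
    have hb : E v0 b := by
      have : b ∈ Finset.univ.filter (fun u => E v0 u) := by rw [hOeq]; simp
      exact (Finset.mem_filter.mp this).2
    have hc : E c v0 := by
      have : c ∈ Finset.univ.filter (fun u => E u v0) := by rw [hIeq]; simp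
      exact (Finset.mem_filter.mp this).2
    have hd : E d v0 := by
      have : d ∈ Finset.univ.filter (fun u => E u v0) := by rw [hIeq]; simp
      exact (Finset.mem_filter.mp this).2
    have hxmem : x0 ∈ Finset.univ.filter (fun u => u ≠ v0 ∧ ¬E v0 u ∧ ¬E u v0) := by
      rw [hNeq]; simp
    have hymem : y0 ∈ Finset.univ.filter (fun u => u ≠ v0 ∧ ¬E v0 u ∧ ¬E u v0) := by
      rw [hNeq]; simp
    have hzmem : z0 ∈ Finset.univ.filter (fun u => u ≠ v0 ∧ ¬E v0 u ∧ ¬E u v0) := by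
      rw [hNeq]; simp
    obtain ⟨dxv0, nv0x, nxv0⟩ := (Finset.mem_filter.mp hxmem).2
    obtain ⟨dyv0, nv0y, nyv0⟩ := (Finset.mem_filter.mp hymem).2
    obtain ⟨dzv0, nv0z, nzv0⟩ := (Finset.mem_filter.mp hzmem).2
    have hexh0 : ∀ t, t = v0 ∨ t = a ∨ t = b ∨ t = c ∨ t = d ∨ t = x0 ∨ t = y0 ∨ t = z0 := by
      intro t
      by_cases h1 : t = v0
      · exact Or.inl h1
      by_cases h2 : E v0 t
      · have : t ∈ Finset.univ.filter (fun u => E v0 u) :=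
          Finset.mem_filter.mpr ⟨Finset.mem_univ t, h2⟩
        rw [hOeq] at this
        simp only [Finset.mem_insert, Finset.mem_singleton] at this
        tauto
      by_cases h3 : E t v0
      · have : t ∈ Finset.univ.filter (fun u => E u v0) :=
          Finset.mem_filter.mpr ⟨Finset.mem_univ t, h3⟩
        rw [hIeq] at this
        simp only [Finset.mem_insert, Finset.mem_singleton] at this
        tauto
      · have : t ∈ Finset.univ.filter (fun u => u ≠ v0 ∧ ¬E v0 u ∧ ¬E u v0) :=
          Finset.mem_filter.mpr ⟨Finset.mem_univ t, h1, h2, h3⟩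
        rw [hNeq] at this
        simp only [Finset.mem_insert, Finset.mem_singleton] at this
        tauto
    have hadjxy : E x0 y0 ∨ E y0 x0 := by
      by_contra hno
      push_neg at hno
      exact noI3 v0 x0 y0 (Ne.symm dxv0) (Ne.symm dyv0) dxy nv0x nxv0 nv0y nyv0 hno.1 hno.2
    have hadjyz : E y0 z0 ∨ E z0 y0 := by
      by_contra hno
      push_neg at hno
      exact noI3 v0 y0 z0 (Ne.symm dyv0) (Ne.symm dzv0) dyz nv0y nyv0 nv0z nzv0 hno.1 hno.2
    have hadjxz : E x0 z0 ∨ E z0 x0 := by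
      by_contra hno
      push_neg at hno
      exact noI3 v0 x0 z0 (Ne.symm dxv0) (Ne.symm dzv0) dxz nv0x nxv0 nv0z nzv0 hno.1 hno.2
    rcases hadjxy with hxy | hyx
    · have hyz : E y0 z0 := by
        rcases hadjyz with h | h
        · exact h
        rcases hadjxz with h2 | h2
        · exact (noTT x0 z0 y0 h2 h hxy).elim
        · exact (noTT z0 x0 y0 h2 hxy h).elim
      have hzx : E z0 x0 := by
        rcases hadjxz with h2 | h2
        · exact (noTT x0 y0 z0 hxy hyz h2).elim
        · exact h2
      exact lem1 E asym noTT noI3 IN2 OUTpin INpin v0 a b c d x0 y0 z0 ha hb hc hd dab dcd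
        hxy hyz hzx nv0x nxv0 nv0y nyv0 nv0z nzv0 dxy dxz dyz hexh0
    · have hxz : E x0 z0 := by
        rcases hadjxz with h | h
        · exact h
        rcases hadjyz with h2 | h2
        · exact (noTT y0 z0 x0 h2 h hyx).elim
        · exact (noTT z0 y0 x0 h2 hyx h).elim
      have hzy : E z0 y0 := by
        rcases hadjyz with h2 | h2
        · exact (noTT y0 x0 z0 hyx hxz h2).elim
        · exact h2
      exact lem1 E asym noTT noI3 IN2 OUTpin INpin v0 a b c d y0 x0 z0 ha hb hc hd dab dcd
        hyx hxz hzy nv0y nyv0 nv0x nxv0 nv0z nzv0 (Ne.symm dxy) dyz dxz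
        (fun t => by
          rcases hexh0 t with hh | hh | hh | hh | hh | hh | hh | hh
          exacts [Or.inl hh, Or.inr (Or.inl hh), Or.inr (Or.inr (Or.inl hh)),
            Or.inr (Or.inr (Or.inr (Or.inl hh))),
            Or.inr (Or.inr (Or.inr (Or.inr (Or.inl hh)))),
            Or.inr (Or.inr (Or.inr (Or.inr (Or.inr (Or.inr (Or.inl hh)))))),
            Or.inr (Or.inr (Or.inr (Or.inr (Or.inr (Or.inl hh))))),
            Or.inr (Or.inr (Or.inr (Or.inr (Or.inr (Or.inr (Or.inr hh))))))])
end

section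
/- Every oriented graph on 14 vertices that contains no independent set of size 4 and no transitive tournament on 3 vertices has at least 38 edges. -/
/-!
View the oriented graph as a simple graph `G`. Since there is no transitive triangle, the out- and
the in-neighbourhood of each vertex are independent, so every neighbourhood is split into two
independent sets (of size at most 3), and `G` has no `K₄`.

Let `M` be the set of non-neighbours of a vertex `v`. A vertex `u ∈ M` has at most 2 neighbours
in `M` inside each part of its neighbourhood (adding `v` keeps the part independent), and at most
3 non-neighbours in `M \ {u}`, because these are pairwise adjacent (otherwise two of them with `u`
and `v` would be an independent 4-set). So `|M| ≤ 8`, every degree is at least 5, and `u` has at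
least `|M| - 4` neighbours in `M`.

With at most 37 edges the degree sum is at most 74, so some `v` has degree 5 and `|M| = 8`. Then
the degree sum bounds the number of edges between `M` and `N(v)` by `74 - 6 * 5 - 8 * 4 = 12`. On
the other hand `N(v)` splits into an independent triple, to which every vertex of `M` is adjacent,
and an independent pair, which at most 3 vertices of `M` miss entirely: that gives at least
`8 + 5 = 13` such edges.
-/

open Finset

namespace SimpleGraph

variable {V : Type*} {G : SimpleGraph V}

theorem IsClique.card_le_of_cliqueFree {n : ℕ} (hω : G.CliqueFree (n + 1)) {s : Finset V}
    (hs : G.IsClique (s : Set V)) : #s ≤ n := by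
  by_contra! h
  obtain ⟨t, hts, ht⟩ := exists_subset_card_eq h
  exact hω t ⟨hs.subset (mod_cast hts), ht⟩

theorem IsIndepSet.card_le_of_indepSetFree {n : ℕ} (hα : G.IndepSetFree (n + 1))
    {s : Finset V} (hs : G.IsIndepSet (s : Set V)) : #s ≤ n :=
  IsClique.card_le_of_cliqueFree (G.cliqueFree_compl.mpr hα) (G.isClique_compl.mpr hs)

theorem IsIndepSet.insert {a : V} {s : Set V} (hs : G.IsIndepSet s)
    (h : ∀ b ∈ s, a ≠ b → ¬G.Adj a b) : G.IsIndepSet (insert a s) :=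
  G.isClique_compl.mp ((G.isClique_compl.mpr hs).insert fun b hb hab => ⟨hab, h b hb hab⟩)

theorem card_le_one_of_isClique_of_isIndepSet {s : Finset V} (hc : G.IsClique (s : Set V))
    (hi : G.IsIndepSet (s : Set V)) : #s ≤ 1 :=
  card_le_one.mpr fun _ hx _ hy => by_contra fun hxy => hi hx hy hxy (hc hx hy hxy)

section DecidableEq

variable [DecidableEq V]

theorem card_lt_of_forall_not_adj {n : ℕ} (hα : G.IndepSetFree (n + 1)) {a : V} {s : Finset V}
    (hs : G.IsIndepSet (s : Set V)) (ha : a ∉ s) (has : ∀ b ∈ s, ¬G.Adj a b) : #s < n := by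
  have hins : G.IsIndepSet (insert a s : Finset V) := by
    rw [coe_insert]
    exact hs.insert fun b hb _ => has b hb
  have := hins.card_le_of_indepSetFree hα
  rw [card_insert_of_notMem ha] at this
  omega

theorem exists_adj_of_card_eq {n : ℕ} (hα : G.IndepSetFree (n + 1)) {P : Finset V}
    (hP : G.IsIndepSet (P : Set V)) (hPn : #P = n) {u : V} (hu : u ∉ P) :
    ∃ x ∈ P, G.Adj u x := by
  by_contra! h
  exact (card_lt_of_forall_not_adj hα hP hu h).ne hPn

theorem card_le_sum_card_filter_adj_of_card_eq [DecidableRel G.Adj] {n : ℕ}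
    (hα : G.IndepSetFree (n + 1)) {P M : Finset V} (hP : G.IsIndepSet (P : Set V))
    (hPn : #P = n) (hPM : Disjoint P M) : #M ≤ ∑ x ∈ P, #{w ∈ M | G.Adj x w} := by
  refine (card_le_card fun u hu => ?_).trans card_biUnion_le
  obtain ⟨x, hx, hux⟩ := exists_adj_of_card_eq hα hP hPn (Finset.disjoint_right.mp hPM hu)
  exact mem_biUnion.mpr ⟨x, hx, mem_filter.mpr ⟨hu, hux.symm⟩⟩

theorem card_le_three_of_forall_not_adj_pair (hα : G.IndepSetFree 4) (hω : G.CliqueFree 4)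
    {a b : V} (hab : a ≠ b) (hnab : ¬G.Adj a b) {C : Finset V} (haC : a ∉ C) (hbC : b ∉ C)
    (hC : ∀ x ∈ C, ¬G.Adj a x ∧ ¬G.Adj b x) : #C ≤ 3 := by
  refine IsClique.card_le_of_cliqueFree hω fun x hx y hy hxy => by_contra fun hnxy => ?_
  have hbx : b ≠ x := by rintro rfl; exact hbC hx
  have hby : b ≠ y := by rintro rfl; exact hbC hy
  have hbxy : G.IsIndepSet ({b, x, y} : Finset V) := by
    simp only [coe_insert, coe_singleton]
    refine IsIndepSet.insert (IsIndepSet.insert (Set.pairwise_singleton y _) ?_) ?_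
    · simpa using fun _ => hnxy
    · simpa using ⟨fun _ => (hC x hx).2, fun _ => (hC y hy).2⟩
  have := card_lt_of_forall_not_adj (a := a) hα hbxy (by aesop)
    (by simpa using ⟨hnab, (hC x hx).1, (hC y hy).1⟩)
  rw [card_insert_of_notMem (by simp [hbx, hby]), card_pair hxy] at this
  omega

theorem card_le_sum_card_filter_adj_of_card_eq_two [DecidableRel G.Adj]
    (hα : G.IndepSetFree 4) (hω : G.CliqueFree 4) {Q M : Finset V}
    (hQ : G.IsIndepSet (Q : Set V)) (hQ2 : #Q = 2) (hQM : Disjoint Q M) :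
    #M ≤ ∑ x ∈ Q, #{w ∈ M | G.Adj x w} + 3 := by
  obtain ⟨a, b, hab, rfl⟩ := card_eq_two.mp hQ2
  rw [sum_pair hab]
  set C := {w ∈ M | ¬G.Adj a w ∧ ¬G.Adj b w}
  have hC : #C ≤ 3 := card_le_three_of_forall_not_adj_pair hα hω hab
    (hQ (by simp) (by simp) hab)
    (fun h => Finset.disjoint_left.mp hQM (by simp) (mem_filter.mp h).1)
    (fun h => Finset.disjoint_left.mp hQM (by simp) (mem_filter.mp h).1)
    fun x hx => (mem_filter.mp hx).2
  have hcover : M ⊆ {w ∈ M | G.Adj a w} ∪ {w ∈ M | G.Adj b w} ∪ C := fun w hw => by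
    simp only [C, mem_union, mem_filter]
    tauto
  have := (card_le_card hcover).trans (card_union_le _ _)
  have := card_union_le {w ∈ M | G.Adj a w} {w ∈ M | G.Adj b w}
  omega

end DecidableEq

theorem sum_card_filter_adj_comm [DecidableRel G.Adj] (s t : Finset V) :
    ∑ a ∈ s, #{b ∈ t | G.Adj a b} = ∑ b ∈ t, #{a ∈ s | G.Adj b a} := by
  have := sum_card_bipartiteAbove_eq_sum_card_bipartiteBelow (s := s) (t := t) (r := G.Adj)
  simpa only [bipartiteAbove, bipartiteBelow, G.adj_comm] using this

section Finite

variable [Fintype V] [DecidableEq V] [DecidableRel G.Adj]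

theorem degree_eq_card_filter_adj_add_card_filter_adj {u v : V}
    (hu : u ∈ Gᶜ.neighborFinset v) :
    G.degree u =
      #{w ∈ G.neighborFinset v | G.Adj u w} + #{w ∈ Gᶜ.neighborFinset v | G.Adj u w} := by
  rw [mem_neighborFinset, compl_adj] at hu
  rw [← card_neighborFinset_eq_degree, ← card_union_of_disjoint]
  · congr 1
    ext w
    simp only [mem_union, mem_filter, mem_neighborFinset, compl_adj]
    have : G.Adj u w → v ≠ w := fun h hvw => hu.2 (hvw ▸ h.symm)
    tauto
  · refine disjoint_filter_filter (Finset.disjoint_left.mpr fun w hw hw' => ?_)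
    rw [mem_neighborFinset] at hw
    rw [mem_neighborFinset, compl_adj] at hw'
    exact hw'.2 hw

theorem card_lt_of_subset_compl_neighborFinset {n : ℕ} (hα : G.IndepSetFree (n + 1)) {v : V}
    {S : Finset V} (hS : G.IsIndepSet (S : Set V)) (hSM : S ⊆ Gᶜ.neighborFinset v) : #S < n :=
  card_lt_of_forall_not_adj (a := v) hα hS (fun hv => by simpa using hSM hv)
    fun w hw => by simpa using ((mem_neighborFinset _ _ _).mp (hSM hw)).2

theorem card_compl_neighborFinset_le_card_filter_adj_add_four (hα : G.IndepSetFree 4)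
    (hω : G.CliqueFree 4) {u v : V}
    (hu : u ∈ Gᶜ.neighborFinset v) :
    #(Gᶜ.neighborFinset v) ≤ #{w ∈ Gᶜ.neighborFinset v | G.Adj u w} + 4 := by
  set M := Gᶜ.neighborFinset v
  have huv : v ≠ u ∧ ¬G.Adj v u := by rwa [mem_neighborFinset, compl_adj] at hu
  have hC : #{w ∈ M.erase u | ¬G.Adj u w} ≤ 3 := by
    refine card_le_three_of_forall_not_adj_pair hα hω huv.1 huv.2 (by simp [M]) (by simp)
      fun x hx => ⟨?_, (mem_filter.mp hx).2⟩
    have hxM := mem_of_mem_erase (mem_filter.mp hx).1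
    rw [mem_neighborFinset, compl_adj] at hxM
    exact hxM.2
  have hadj : #{w ∈ M.erase u | G.Adj u w} ≤ #{w ∈ M | G.Adj u w} :=
    card_le_card (filter_subset_filter _ (erase_subset u M))
  have := card_filter_add_card_filter_not (s := M.erase u) (fun w => G.Adj u w)
  have := card_erase_add_one hu
  omega

variable (G) in
def IsLocallyBipartite : Prop :=
  ∀ v, ∃ A ⊆ G.neighborFinset v,
    G.IsIndepSet (A : Set V) ∧ G.IsIndepSet ((G.neighborFinset v \ A : Finset V) : Set V)

theorem IsLocallyBipartite.cliqueFree_four (hG : G.IsLocallyBipartite) : G.CliqueFree 4 := by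
  rintro s ⟨hs, hs4⟩
  obtain ⟨a, ha⟩ : s.Nonempty := by rw [← card_pos]; omega
  obtain ⟨A, hAN, hA, hNA⟩ := hG a
  have hsub : s.erase a ⊆ G.neighborFinset a := fun x hx => by
    rw [mem_erase] at hx
    exact (mem_neighborFinset _ _ _).mpr (hs ha hx.2 (Ne.symm hx.1))
  have hin : #(s.erase a ∩ A) ≤ 1 := card_le_one_of_isClique_of_isIndepSet
    (hs.subset (coe_subset.mpr (inter_subset_left.trans (erase_subset a s))))
    (hA.mono (coe_subset.mpr inter_subset_right))
  have hout : #(s.erase a \ A) ≤ 1 := card_le_one_of_isClique_of_isIndepSet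
    (hs.subset (coe_subset.mpr (sdiff_subset.trans (erase_subset a s))))
    (hNA.mono (coe_subset.mpr (sdiff_subset_sdiff hsub le_rfl)))
  have := card_inter_add_card_sdiff (s.erase a) A
  rw [card_erase_of_mem ha] at this
  omega

theorem IsLocallyBipartite.card_filter_adj_compl_neighborFinset_le_four
    (hα : G.IndepSetFree 4) (hG : G.IsLocallyBipartite) (u v : V) :
    #{w ∈ Gᶜ.neighborFinset v | G.Adj u w} ≤ 4 := by
  set F := {w ∈ Gᶜ.neighborFinset v | G.Adj u w}
  obtain ⟨A, -, hA, hNA⟩ := hG u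
  have hFN : F ⊆ G.neighborFinset u := fun w hw => by simpa using (mem_filter.mp hw).2
  have hin : #(F ∩ A) < 3 := card_lt_of_subset_compl_neighborFinset hα
    (hA.mono (coe_subset.mpr inter_subset_right)) (inter_subset_left.trans (filter_subset _ _))
  have hout : #(F \ A) < 3 := card_lt_of_subset_compl_neighborFinset hα
    (hNA.mono (coe_subset.mpr (sdiff_subset_sdiff hFN le_rfl)))
    (sdiff_subset.trans (filter_subset _ _))
  have := card_inter_add_card_sdiff F A
  omega

theorem IsLocallyBipartite.card_compl_neighborFinset_le_eight (hα : G.IndepSetFree 4)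
    (hG : G.IsLocallyBipartite) (v : V) : #(Gᶜ.neighborFinset v) ≤ 8 := by
  obtain hM | ⟨u, hu⟩ := (Gᶜ.neighborFinset v).eq_empty_or_nonempty
  · simp [hM]
  · have := card_compl_neighborFinset_le_card_filter_adj_add_four hα hG.cliqueFree_four hu
    have := hG.card_filter_adj_compl_neighborFinset_le_four hα u v
    omega

theorem IsLocallyBipartite.card_le_degree_add_nine (hα : G.IndepSetFree 4)
    (hG : G.IsLocallyBipartite) (v : V) : Fintype.card V ≤ G.degree v + 9 := by
  have := hG.card_compl_neighborFinset_le_eight hα v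
  rw [card_neighborFinset_eq_degree, degree_compl] at this
  omega

theorem IsLocallyBipartite.two_mul_card_le_sum_card_filter_adj_add_three
    (hα : G.IndepSetFree 4) (hG : G.IsLocallyBipartite) {v : V} (hv : G.degree v = 5)
    {M : Finset V} (hM : Disjoint (G.neighborFinset v) M) :
    2 * #M ≤ ∑ x ∈ G.neighborFinset v, #{w ∈ M | G.Adj x w} + 3 := by
  obtain ⟨A, hAN, hA, hNA⟩ := hG v
  have hcard := card_sdiff_add_card_eq_card hAN
  have := hA.card_le_of_indepSetFree hα
  have := hNA.card_le_of_indepSetFree hα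
  rw [card_neighborFinset_eq_degree, hv] at hcard
  rw [← sum_sdiff hAN]
  have hAM := hM.mono_left hAN
  have hNAM := hM.mono_left (sdiff_subset (s := G.neighborFinset v) (t := A))
  obtain hA3 | hA2 : #A = 3 ∨ #A = 2 := by omega
  · have := card_le_sum_card_filter_adj_of_card_eq hα hA hA3 hAM
    have := card_le_sum_card_filter_adj_of_card_eq_two hα hG.cliqueFree_four hNA (by omega) hNAM
    omega
  · have := card_le_sum_card_filter_adj_of_card_eq_two hα hG.cliqueFree_four hA hA2 hAM
    have := card_le_sum_card_filter_adj_of_card_eq hα hNA (by omega) hNAM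
    omega

theorem IsLocallyBipartite.thirtyEight_le_card_edgeFinset (hα : G.IndepSetFree 4)
    (hG : G.IsLocallyBipartite) (hV : Fintype.card V = 14) : 38 ≤ #G.edgeFinset := by
  by_contra! h
  have hsum : ∑ v, G.degree v ≤ 74 := by rw [sum_degrees_eq_twice_card_edges]; omega
  have hlow (v : V) : 5 ≤ G.degree v := by have := hG.card_le_degree_add_nine hα v; omega
  obtain ⟨v, hv⟩ : ∃ v, G.degree v = 5 := by
    by_contra! hne
    have : ∑ _v : V, 6 ≤ ∑ v, G.degree v :=
      sum_le_sum fun v _ => by have := hlow v; have := hne v; omega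
    simp only [sum_const, card_univ, hV, smul_eq_mul] at this
    omega
  have hM : #(Gᶜ.neighborFinset v) = 8 := by
    rw [card_neighborFinset_eq_degree, degree_compl, hV, hv]
  have hsumM : ∑ u ∈ Gᶜ.neighborFinset v, G.degree u ≤ 44 := by
    have hsplit := sum_add_sum_compl (Gᶜ.neighborFinset v) fun u => G.degree u
    have hcompl := card_nsmul_le_sum (Gᶜ.neighborFinset v)ᶜ (fun u => G.degree u) 5
      fun u _ => hlow u
    rw [card_compl, hV, hM, smul_eq_mul] at hcompl
    omega
  have hMN : ∑ u ∈ Gᶜ.neighborFinset v, #{w ∈ G.neighborFinset v | G.Adj u w} ≤ 12 := by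
    have : ∑ u ∈ Gᶜ.neighborFinset v, (#{w ∈ G.neighborFinset v | G.Adj u w} + 4) ≤
        ∑ u ∈ Gᶜ.neighborFinset v, G.degree u :=
      sum_le_sum fun u hu => by
        have := card_compl_neighborFinset_le_card_filter_adj_add_four hα hG.cliqueFree_four hu
        rw [degree_eq_card_filter_adj_add_card_filter_adj hu]
        omega
    rw [sum_add_distrib, sum_const, hM, smul_eq_mul] at this
    omega
  have hdisj : Disjoint (G.neighborFinset v) (Gᶜ.neighborFinset v) :=
    Set.disjoint_toFinset.mpr (G.compl_neighborSet_disjoint v)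
  have hNM := hG.two_mul_card_le_sum_card_filter_adj_add_three hα hv hdisj
  rw [← sum_card_filter_adj_comm, hM] at hNM
  omega

end Finite

end SimpleGraph

section Oriented

open SimpleGraph

variable {V : Type*} {E : V → V → Prop}

theorem IsOriented.indepSetFree_fromRel (hor : IsOriented E) {m : ℕ} (hE : ¬HasIndep E m) :
    (fromRel E).IndepSetFree m := by
  rintro t ⟨ht, htm⟩
  refine hE ⟨t, htm, fun x hx y hy hxy => ?_⟩
  obtain rfl | hne := eq_or_ne x y
  · exact hor x x hxy hxy
  · exact ht hx hy hne ((fromRel_adj E x y).mpr ⟨hne, .inl hxy⟩)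

theorem IsOriented.natCard_eq_card_edgeFinset_fromRel [Fintype V]
    [DecidableRel (fromRel E).Adj] (hor : IsOriented E) :
    Nat.card {p : V × V // E p.1 p.2} = #(fromRel E).edgeFinset := by
  rw [edgeFinset_card, ← Nat.card_eq_fintype_card]
  refine Nat.card_congr (Equiv.ofBijective
    (fun p => ⟨s(p.1.1, p.1.2), (fromRel_adj E _ _).mpr
      ⟨fun h => hor _ _ p.2 (h ▸ p.2), .inl p.2⟩⟩) ⟨?_, ?_⟩)
  · rintro ⟨⟨a, b⟩, hab⟩ ⟨⟨c, d⟩, hcd⟩ h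
    obtain ⟨rfl, rfl⟩ | ⟨rfl, rfl⟩ := Sym2.eq_iff.mp (congrArg Subtype.val h)
    · rfl
    · exact (hor _ _ hab hcd).elim
  · rintro ⟨e, he⟩
    induction e using Sym2.ind with
    | _ x y =>
      obtain hxy | hyx := ((fromRel_adj E x y).mp he).2
      · exact ⟨⟨(x, y), hxy⟩, rfl⟩
      · exact ⟨⟨(y, x), hyx⟩, Subtype.ext Sym2.eq_swap⟩

theorem isLocallyBipartite_fromRel [Fintype V] [DecidableEq V] [DecidableRel (fromRel E).Adj]
    (hL3 : ¬ ∃ a b c : V, E a b ∧ E b c ∧ E a c) : (fromRel E).IsLocallyBipartite := by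
  classical
  intro v
  refine ⟨{w ∈ (fromRel E).neighborFinset v | E v w}, filter_subset _ _, ?_, ?_⟩
  · intro x hx y hy _ hxy
    simp only [coe_filter, Set.mem_ofPred_eq] at hx hy
    obtain h | h := ((fromRel_adj E x y).mp hxy).2
    · exact hL3 ⟨v, x, y, hx.2, h, hy.2⟩
    · exact hL3 ⟨v, y, x, hy.2, h, hx.2⟩
  · have hin {x : V} (hx : x ∈ (((fromRel E).neighborFinset v \
        {w ∈ (fromRel E).neighborFinset v | E v w} : Finset V) : Set V)) : E x v := by
      simp only [coe_sdiff, coe_filter, Set.mem_sdiff, mem_coe, mem_neighborFinset,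
        Set.mem_ofPred_eq, fromRel_adj] at hx
      tauto
    intro x hx y hy _ hxy
    obtain h | h := ((fromRel_adj E x y).mp hxy).2
    · exact hL3 ⟨x, y, v, h, hin hy, hin hx⟩
    · exact hL3 ⟨y, x, v, h, hin hx, hin hy⟩

end Oriented

theorem stmt10 {V : Type*} [Fintype V] (E : V → V → Prop)
    (hcard : Fintype.card V = 14)
    (hor : IsOriented E)
    (hI4 : ¬ HasIndep E 4)
    (hL3 : ¬ ∃ a b c : V, E a b ∧ E b c ∧ E a c) :
    38 ≤ Nat.card {p : V × V // E p.1 p.2} := by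
  classical
  rw [hor.natCard_eq_card_edgeFinset_fromRel]
  exact (isLocallyBipartite_fromRel hL3).thirtyEight_le_card_edgeFinset
    (hor.indepSetFree_fromRel hI4) hcard
end

section
/- Let D be an oriented graph with no independent set of size m and no transitive tournament on 3 vertices, and let v be a vertex with in-degree m−1 and out-degree m−1. Then the number of edges (in either direction) between N⁻(v) ∪ N⁺(v) and I(v) is at least 4(|I(v)| − m + 1). -/
lemma key_bound {V : Type*} {E : V → V → Prop} {m : ℕ}
    [∀ u : V, DecidablePred fun n : V => E u n ∨ E n u]
    (hor : IsOriented E) (hIm : ¬ HasIndep E m)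
    {W : Finset V} (hWcard : W.card = m - 1)
    (hWind : ∀ x ∈ W, ∀ y ∈ W, ¬ E x y)
    (F : V → V → Prop)
    (hFadj : ∀ a u, F a u → E u a ∨ E a u)
    (hF : ∀ a u u', F a u → F a u' → E u u' → False)
    {T : Finset V} (hTW : ∀ u ∈ T, u ∉ W)
    (hT : ∀ u ∈ T, (W.filter (fun n => E u n ∨ E n u)).card = 1 ∧ ∃ a ∈ W, F a u) :
    T.card ≤ m - 1 := by
  classical
  rw [← hWcard]
  have hex : ∀ u ∈ T, ∃ a, a ∈ W ∧ F a u := by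
    intro u hu
    obtain ⟨a, ha, hfa⟩ := (hT u hu).2
    exact ⟨a, ha, hfa⟩
  set f : V → V := fun u => if h : ∃ a, a ∈ W ∧ F a u then h.choose else u with hf
  have hfspec : ∀ u ∈ T, f u ∈ W ∧ F (f u) u := by
    intro u hu
    have h : ∃ a, a ∈ W ∧ F a u := hex u hu
    simp only [hf, dif_pos h]
    exact h.choose_spec
  have huniq : ∀ z ∈ T, ∀ x ∈ W, (E z x ∨ E x z) → x = f z := by
    intro z hz x hx hadj
    obtain ⟨c, hc⟩ := Finset.card_eq_one.1 (hT z hz).1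
    have hx' : x ∈ W.filter (fun n => E z n ∨ E n z) := Finset.mem_filter.2 ⟨hx, hadj⟩
    have ha' : f z ∈ W.filter (fun n => E z n ∨ E n z) :=
      Finset.mem_filter.2 ⟨(hfspec z hz).1, hFadj _ _ (hfspec z hz).2⟩
    rw [hc, Finset.mem_singleton] at hx' ha'
    rw [hx', ha']
  apply Finset.card_le_card_of_injOn f (fun u hu => (hfspec u hu).1)
  intro u hu u' hu' heq
  by_contra hne
  obtain ⟨haW, haF⟩ := hfspec u hu
  obtain ⟨haW', haF'⟩ := hfspec u' hu'
  rw [heq] at haF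
  by_cases hEuu' : E u u'
  · exact hF (f u') u u' haF haF' hEuu'
  by_cases hEu'u : E u' u
  · exact hF (f u') u' u haF' haF hEu'u
  apply hIm
  refine ⟨insert u (insert u' (W.erase (f u'))), ?_, ?_⟩
  · have h1 : u' ∉ W.erase (f u') := fun h => hTW u' hu' (Finset.mem_of_mem_erase h)
    have h2 : u ∉ insert u' (W.erase (f u')) := by
      simp only [Finset.mem_insert]
      rintro (rfl | h)
      · exact hne rfl
      · exact hTW u hu (Finset.mem_of_mem_erase h)
    rw [Finset.card_insert_of_notMem h2, Finset.card_insert_of_notMem h1,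
        Finset.card_erase_of_mem haW']
    have : 1 ≤ W.card := Finset.card_pos.2 ⟨f u', haW'⟩
    omega
  · intro x hx y hy hExy
    have hnadj : ∀ z ∈ W, z ≠ f u' → ¬ (E u z ∨ E z u) := by
      intro z hz hza hadj
      exact hza ((huniq u hu z hz hadj).trans heq)
    have hnadj' : ∀ z ∈ W, z ≠ f u' → ¬ (E u' z ∨ E z u') := by
      intro z hz hza hadj
      exact hza (huniq u' hu' z hz hadj)
    simp only [Finset.mem_insert, Finset.mem_erase] at hx hy
    rcases hx with rfl | rfl | ⟨hxa, hxW⟩ <;> rcases hy with rfl | rfl | ⟨hya, hyW⟩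
    · exact hor _ _ hExy hExy
    · exact hEuu' hExy
    · exact hnadj y hyW hya (Or.inl hExy)
    · exact hEu'u hExy
    · exact hor _ _ hExy hExy
    · exact hnadj' y hyW hya (Or.inl hExy)
    · exact hnadj x hxW hxa (Or.inr hExy)
    · exact hnadj' x hxW hxa (Or.inr hExy)
    · exact hWind x hxW y hyW hExy

lemma natCard_eq_filter {α : Type*} [Fintype α] (p : α → Prop) [DecidablePred p] :
    Nat.card {x // p x} = (Finset.univ.filter p).card := by
  rw [Nat.card_eq_fintype_card, Fintype.card_subtype]

lemma exists_nbr {V : Type*} {E : V → V → Prop} {m : ℕ}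
    (hIm : ¬ HasIndep E m) (hor : IsOriented E)
    (W : Finset V) (hWcard : W.card = m - 1) (hm : 1 ≤ m)
    (hWind : ∀ x ∈ W, ∀ y ∈ W, ¬ E x y)
    (u : V) (hu : u ∉ W)
    (hno : ∀ n ∈ W, ¬ (E u n ∨ E n u)) : False := by
  classical
  apply hIm
  refine ⟨insert u W, ?_, ?_⟩
  · rw [Finset.card_insert_of_notMem hu, hWcard]; omega
  · intro x hx y hy
    simp only [Finset.mem_insert] at hx hy
    rcases hx with rfl | hx <;> rcases hy with rfl | hy
    · exact fun h => hor _ _ h h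
    · exact fun h => hno _ hy (Or.inl h)
    · exact fun h => hno _ hx (Or.inr h)
    · exact hWind _ hx _ hy

lemma side_bound {V : Type*} {E : V → V → Prop} {m : ℕ}
    [∀ u : V, DecidablePred fun n : V => E u n ∨ E n u]
    (hor : IsOriented E) (hIm : ¬ HasIndep E m) (hm : 1 ≤ m)
    (hF1 : ∀ a u u', E a u → E a u' → E u u' → False)
    (hF2 : ∀ a u u', E u a → E u' a → E u u' → False)
    {W : Finset V} (hWcard : W.card = m - 1)
    (hWind : ∀ x ∈ W, ∀ y ∈ W, ¬ E x y)
    {I : Finset V} (hIW : ∀ u ∈ I, u ∉ W) :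
    2 * I.card ≤ (∑ u ∈ I, (W.filter (fun n => E u n ∨ E n u)).card) + 2 * (m - 1) := by
  classical
  have hd1 : ∀ u ∈ I, 1 ≤ (W.filter (fun n => E u n ∨ E n u)).card := by
    intro u hu
    rw [Nat.one_le_iff_ne_zero]
    intro h0
    rw [Finset.card_eq_zero, Finset.eq_empty_iff_forall_notMem] at h0
    exact exists_nbr hIm hor W hWcard hm hWind u (hIW u hu)
      (fun n hn hadj => h0 n (Finset.mem_filter.2 ⟨hn, hadj⟩))
  have hsplit := Finset.sum_filter_add_sum_filter_not I
    (fun u => (W.filter (fun n => E u n ∨ E n u)).card = 1)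
    (fun u => (W.filter (fun n => E u n ∨ E n u)).card)
  have hs1 : ∑ u ∈ I.filter (fun u => (W.filter (fun n => E u n ∨ E n u)).card = 1),
      (W.filter (fun n => E u n ∨ E n u)).card
      = (I.filter (fun u => (W.filter (fun n => E u n ∨ E n u)).card = 1)).card := by
    rw [Finset.card_eq_sum_ones]
    exact Finset.sum_congr rfl (fun u hu => (Finset.mem_filter.1 hu).2)
  have hs2 : (I.filter (fun u => ¬ (W.filter (fun n => E u n ∨ E n u)).card = 1)).card * 2
      ≤ ∑ u ∈ I.filter (fun u => ¬ (W.filter (fun n => E u n ∨ E n u)).card = 1),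
        (W.filter (fun n => E u n ∨ E n u)).card := by
    have := Finset.card_nsmul_le_sum
      (I.filter (fun u => ¬ (W.filter (fun n => E u n ∨ E n u)).card = 1))
      (fun u => (W.filter (fun n => E u n ∨ E n u)).card) 2
      (fun u hu => by
        obtain ⟨huI, hne⟩ := Finset.mem_filter.1 hu
        have := hd1 u huI
        show 2 ≤ (W.filter (fun n => E u n ∨ E n u)).card
        omega)
    simpa [smul_eq_mul, mul_comm] using this
  have hcards := Finset.card_filter_add_card_filter_not
    (s := I) (p := fun u => (W.filter (fun n => E u n ∨ E n u)).card = 1)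
  -- bound the number of unique-neighbour vertices
  have hsub : I.filter (fun u => (W.filter (fun n => E u n ∨ E n u)).card = 1) ⊆
      (I.filter (fun u => (W.filter (fun n => E u n ∨ E n u)).card = 1 ∧ ∃ a ∈ W, E a u)) ∪
      (I.filter (fun u => (W.filter (fun n => E u n ∨ E n u)).card = 1 ∧ ∃ a ∈ W, E u a)) := by
    intro u hu
    obtain ⟨huI, hdu⟩ := Finset.mem_filter.1 hu
    have hpos : 0 < (W.filter (fun n => E u n ∨ E n u)).card := by omega
    obtain ⟨a, ha⟩ := Finset.card_pos.1 hpos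
    obtain ⟨haW, hadj⟩ := Finset.mem_filter.1 ha
    rcases hadj with h | h
    · exact Finset.mem_union.2 (Or.inr (Finset.mem_filter.2 ⟨huI, hdu, a, haW, h⟩))
    · exact Finset.mem_union.2 (Or.inl (Finset.mem_filter.2 ⟨huI, hdu, a, haW, h⟩))
  have hin_le : (I.filter (fun u => (W.filter (fun n => E u n ∨ E n u)).card = 1 ∧
      ∃ a ∈ W, E a u)).card ≤ m - 1 :=
    key_bound hor hIm hWcard hWind (fun a u => E a u)
      (fun a u h => Or.inr h) hF1
      (fun u hu => hIW u (Finset.mem_filter.1 hu).1)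
      (fun u hu => (Finset.mem_filter.1 hu).2)
  have hout_le : (I.filter (fun u => (W.filter (fun n => E u n ∨ E n u)).card = 1 ∧
      ∃ a ∈ W, E u a)).card ≤ m - 1 :=
    key_bound hor hIm hWcard hWind (fun a u => E u a)
      (fun a u h => Or.inl h) hF2
      (fun u hu => hIW u (Finset.mem_filter.1 hu).1)
      (fun u hu => (Finset.mem_filter.1 hu).2)
  have hSA_le : (I.filter (fun u => (W.filter (fun n => E u n ∨ E n u)).card = 1)).card
      ≤ 2 * (m - 1) := by
    calc _ ≤ _ := Finset.card_le_card hsub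
    _ ≤ _ + _ := Finset.card_union_le _ _
    _ ≤ 2 * (m - 1) := by omega
  omega

theorem stmt11 {V : Type*} [Fintype V] (E : V → V → Prop) (m : ℕ)
    (hor : IsOriented E)
    (hIm : ¬ HasIndep E m)
    (hL3 : ¬ ∃ a b c : V, E a b ∧ E b c ∧ E a c)
    (v : V)
    (hin : Nat.card {w : V // E w v} = m - 1)
    (hout : Nat.card {w : V // E v w} = m - 1) :
    4 * (Nat.card {w : V // w ≠ v ∧ ¬ E v w ∧ ¬ E w v} + 1 - m) ≤
      Nat.card {p : V × V // E p.1 p.2 ∧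
        (((E p.1 v ∨ E v p.1) ∧ (p.2 ≠ v ∧ ¬ E v p.2 ∧ ¬ E p.2 v)) ∨
         ((p.1 ≠ v ∧ ¬ E v p.1 ∧ ¬ E p.1 v) ∧ (E p.2 v ∨ E v p.2)))} := by
  classical
  have hm : 1 ≤ m := by
    rcases Nat.eq_zero_or_pos m with rfl | h
    · exact absurd ⟨∅, by simp, by simp⟩ hIm
    · exact h
  have hF1 : ∀ a u u', E a u → E a u' → E u u' → False :=
    fun a u u' h1 h2 h3 => hL3 ⟨a, u, u', h1, h3, h2⟩
  have hF2 : ∀ a u u', E u a → E u' a → E u u' → False :=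
    fun a u u' h1 h2 h3 => hL3 ⟨u, u', a, h3, h2, h1⟩
  set Np := Finset.univ.filter (fun a : V => E v a) with hNp
  set Nm := Finset.univ.filter (fun b : V => E b v) with hNm
  set Is := Finset.univ.filter (fun w : V => w ≠ v ∧ ¬ E v w ∧ ¬ E w v) with hIs
  set NN := Finset.univ.filter (fun n : V => E n v ∨ E v n) with hNN
  have hNpcard : Np.card = m - 1 := by rw [hNp, ← natCard_eq_filter]; exact hout
  have hNmcard : Nm.card = m - 1 := by rw [hNm, ← natCard_eq_filter]; exact hin
  have hNpind : ∀ x ∈ Np, ∀ y ∈ Np, ¬ E x y := by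
    intro x hx y hy hxy
    rw [hNp] at hx hy
    exact hL3 ⟨v, x, y, (Finset.mem_filter.1 hx).2, hxy, (Finset.mem_filter.1 hy).2⟩
  have hNmind : ∀ x ∈ Nm, ∀ y ∈ Nm, ¬ E x y := by
    intro x hx y hy hxy
    rw [hNm] at hx hy
    exact hL3 ⟨x, y, v, hxy, (Finset.mem_filter.1 hy).2, (Finset.mem_filter.1 hx).2⟩
  have hIsNp : ∀ u ∈ Is, u ∉ Np := by
    intro u hu hu'
    rw [hIs] at hu; rw [hNp] at hu'
    exact (Finset.mem_filter.1 hu).2.2.1 (Finset.mem_filter.1 hu').2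
  have hIsNm : ∀ u ∈ Is, u ∉ Nm := by
    intro u hu hu'
    rw [hIs] at hu; rw [hNm] at hu'
    exact (Finset.mem_filter.1 hu).2.2.2 (Finset.mem_filter.1 hu').2
  have hA := side_bound hor hIm hm hF1 hF2 hNpcard hNpind hIsNp
  have hB := side_bound hor hIm hm hF1 hF2 hNmcard hNmind hIsNm
  have hIscard : Nat.card {w : V // w ≠ v ∧ ¬ E v w ∧ ¬ E w v} = Is.card := by
    rw [hIs]; exact natCard_eq_filter _
  have hPcard : Nat.card {p : V × V // E p.1 p.2 ∧
        (((E p.1 v ∨ E v p.1) ∧ (p.2 ≠ v ∧ ¬ E v p.2 ∧ ¬ E p.2 v)) ∨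
         ((p.1 ≠ v ∧ ¬ E v p.1 ∧ ¬ E p.1 v) ∧ (E p.2 v ∨ E v p.2)))}
      = (Finset.univ.filter (fun p : V × V => E p.1 p.2 ∧
        (((E p.1 v ∨ E v p.1) ∧ (p.2 ≠ v ∧ ¬ E v p.2 ∧ ¬ E p.2 v)) ∨
         ((p.1 ≠ v ∧ ¬ E v p.1 ∧ ¬ E p.1 v) ∧ (E p.2 v ∨ E v p.2))))).card :=
    natCard_eq_filter _
  rw [hIscard, hPcard]
  set g : V → V → V × V := fun u n => if E u n then (u, n) else (n, u) with hg
  have hIsNN : ∀ u ∈ Is, u ∉ NN := by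
    intro u hu hu'
    rw [hIs] at hu; rw [hNN] at hu'
    obtain ⟨-, h1, h2⟩ := (Finset.mem_filter.1 hu).2
    rcases (Finset.mem_filter.1 hu').2 with h | h
    exacts [h2 h, h1 h]
  have hdisj : ∀ u ∈ Is, ∀ u' ∈ Is, u ≠ u' →
      Disjoint ((NN.filter (fun n => E u n ∨ E n u)).image (g u))
        ((NN.filter (fun n => E u' n ∨ E n u')).image (g u')) := by
    intro u hu u' hu' hne
    rw [Finset.disjoint_left]
    intro p hp hp'
    obtain ⟨n, hn, hpn⟩ := Finset.mem_image.1 hp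
    obtain ⟨n', hn', hpn'⟩ := Finset.mem_image.1 hp'
    have hnNN := (Finset.mem_filter.1 hn).1
    have hnNN' := (Finset.mem_filter.1 hn').1
    rw [← hpn'] at hpn
    by_cases h1 : E u n <;> by_cases h2 : E u' n' <;>
      simp only [hg, h1, h2, Prod.mk.injEq, if_true, if_false, ite_true, ite_false] at hpn
    · exact hne hpn.1
    · exact hIsNN u' hu' (by rw [← hpn.2]; exact hnNN)
    · exact hIsNN u hu (by rw [hpn.2]; exact hnNN')
    · exact hne hpn.2
  have himg : ∀ u ∈ Is, ((NN.filter (fun n => E u n ∨ E n u)).image (g u)).card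
      = (NN.filter (fun n => E u n ∨ E n u)).card := by
    intro u hu
    apply Finset.card_image_of_injOn
    intro n hn n' hn' hgn
    have hnNN := (Finset.mem_filter.1 hn).1
    have hnNN' := (Finset.mem_filter.1 hn').1
    by_cases h1 : E u n <;> by_cases h2 : E u n' <;>
      simp only [hg, h1, h2, Prod.mk.injEq, if_true, if_false, ite_true, ite_false] at hgn
    · exact hgn.2
    · exact absurd (show u ∈ NN by rw [hgn.1]; exact hnNN') (hIsNN u hu)
    · exact absurd (show u ∈ NN by rw [← hgn.1]; exact hnNN) (hIsNN u hu)
    · exact hgn.1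
  have hQcard : (Is.biUnion (fun u => (NN.filter (fun n => E u n ∨ E n u)).image (g u))).card
      = ∑ u ∈ Is, (NN.filter (fun n => E u n ∨ E n u)).card := by
    rw [Finset.card_biUnion hdisj]
    exact Finset.sum_congr rfl himg
  have hQP : Is.biUnion (fun u => (NN.filter (fun n => E u n ∨ E n u)).image (g u)) ⊆
      (Finset.univ.filter (fun p : V × V => E p.1 p.2 ∧
        (((E p.1 v ∨ E v p.1) ∧ (p.2 ≠ v ∧ ¬ E v p.2 ∧ ¬ E p.2 v)) ∨
         ((p.1 ≠ v ∧ ¬ E v p.1 ∧ ¬ E p.1 v) ∧ (E p.2 v ∨ E v p.2))))) := by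
    intro p hp
    obtain ⟨u, hu, hp⟩ := Finset.mem_biUnion.1 hp
    obtain ⟨n, hn, rfl⟩ := Finset.mem_image.1 hp
    obtain ⟨hnNN, hadj⟩ := Finset.mem_filter.1 hn
    have huI : u ≠ v ∧ ¬ E v u ∧ ¬ E u v := by
      rw [hIs] at hu; exact (Finset.mem_filter.1 hu).2
    have hnv : E n v ∨ E v n := by
      rw [hNN] at hnNN; exact (Finset.mem_filter.1 hnNN).2
    by_cases h1 : E u n
    · have hgeq : g u n = (u, n) := if_pos h1
      rw [hgeq]
      exact Finset.mem_filter.2 ⟨Finset.mem_univ _, h1, Or.inr ⟨huI, hnv⟩⟩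
    · have hgeq : g u n = (n, u) := if_neg h1
      rw [hgeq]
      exact Finset.mem_filter.2 ⟨Finset.mem_univ _, hadj.resolve_left h1, Or.inl ⟨hnv, huI⟩⟩
  have hQle : ∑ u ∈ Is, (NN.filter (fun n => E u n ∨ E n u)).card ≤
      (Finset.univ.filter (fun p : V × V => E p.1 p.2 ∧
        (((E p.1 v ∨ E v p.1) ∧ (p.2 ≠ v ∧ ¬ E v p.2 ∧ ¬ E p.2 v)) ∨
         ((p.1 ≠ v ∧ ¬ E v p.1 ∧ ¬ E p.1 v) ∧ (E p.2 v ∨ E v p.2))))).card := by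
    rw [← hQcard]
    exact Finset.card_le_card hQP
  have hNNeq : NN = Np ∪ Nm := by
    rw [hNN, hNp, hNm]
    ext x
    simp only [Finset.mem_filter, Finset.mem_union, Finset.mem_univ, true_and]
    tauto
  have hdisjNN : Disjoint Np Nm := by
    rw [hNp, hNm, Finset.disjoint_left]
    intro a ha ha'
    exact hor v a (Finset.mem_filter.1 ha).2 (Finset.mem_filter.1 ha').2
  have hsum : ∑ u ∈ Is, (NN.filter (fun n => E u n ∨ E n u)).card
      = (∑ u ∈ Is, (Np.filter (fun n => E u n ∨ E n u)).card)
        + (∑ u ∈ Is, (Nm.filter (fun n => E u n ∨ E n u)).card) := by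
    rw [← Finset.sum_add_distrib]
    refine Finset.sum_congr rfl fun u _ => ?_
    rw [hNNeq, Finset.filter_union, Finset.card_union_of_disjoint]
    exact Finset.disjoint_filter_filter hdisjNN
  omega
end

section
/- For every natural number m ≥ 3, every oriented graph on m² − m + 2 vertices containing no independent set of size m and no transitive tournament on 3 vertices has at least (m² − m + 2)(2m − 3)/2 edges. -/
/-!
Let `G` be the underlying simple graph of `E`. As `E` has no transitive triangle, out- and
in-neighbourhoods are independent, every triangle is cyclic and `G` has no `K₄`.

By induction on `k`, a vertex set `W` without independent `k`-set has at most `f(k)` elements,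
where `f(k) = k(k-1) + 2` for `k ≥ 3` and `f(2) = 3` (`orderBound`): the non-neighbours of a
vertex have no independent `(k-1)`-set, whence `|W| ≤ 2(k-1) + 1 + f(k-1) = f(k) + 1` for `k ≥ 4`.
In the case of equality every vertex `v` has `k - 1` out- and `k - 1` in-neighbours, and each
non-neighbour of `v` has neighbours among both. At most two non-neighbours have the same unique
neighbour `u` among the out-neighbours, as three would span a `K₄` with `u`, and likewise among
the in-neighbours. Counting the non-neighbours of `v` with this excludes equality for `k ≠ 5`; for
`k = 5` it yields 12 vertices of degree 5 in a 14-vertex graph without independent 4-set, which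
has at most 9.

In the theorem the non-neighbours of each vertex number at most `f(m-1)`, so every degree is at
least `2m - 3`; summing degrees counts every edge twice.
-/

open Finset

theorem Finset.card_filter_eq_one_add_card_filter_eq_one_add {α : Type*} {S : Finset α}
    {x y : α → ℕ} (h : ∀ s ∈ S, 1 ≤ x s ∧ 1 ≤ y s ∧ x s + y s ≤ 3) :
    #{s ∈ S | x s = 1} + #{s ∈ S | y s = 1} + #{s ∈ S | x s + y s = 3} = 2 * #S := by
  rw [card_filter, card_filter, card_filter, ← sum_add_distrib, ← sum_add_distrib,
    card_eq_sum_ones, mul_sum]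
  refine sum_congr rfl fun s hs => ?_
  have := h s hs
  split_ifs <;> omega

-- The value at `0` is arbitrary: every set contains the empty independent set.
def orderBound : ℕ → ℕ
  | 0 | 1 => 0
  | 2 => 3
  | k + 3 => (k + 3) * (k + 2) + 2

theorem orderBound_succ {k : ℕ} (hk : 3 ≤ k) : orderBound (k + 1) = orderBound k + 2 * k := by
  obtain ⟨k, rfl⟩ := Nat.exists_eq_add_of_le' hk
  simp only [orderBound]
  ring

theorem orderBound_succ_le (k : ℕ) : orderBound (k + 1) ≤ (k + 1) * k + 2 := by
  rcases k with _ | _ | k <;> simp [orderBound]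

theorem four_mul_lt_orderBound {k : ℕ} (hk : 5 ≤ k) : 4 * k < orderBound k := by
  obtain ⟨k, rfl⟩ := Nat.exists_eq_add_of_le' hk
  simp only [orderBound]
  nlinarith

/- For a non-neighbour `s` of a vertex `v`, `x s`, `y s` and `d s` count the neighbours of `s` among
the out-neighbours, the in-neighbours and the non-neighbours of `v`. -/
theorem eq_three_and_twelve_le_card_filter {α : Type*} {S : Finset α} {b : ℕ} {x y d : α → ℕ}
    (hb : 2 ≤ b) (hS : #S = orderBound (b + 1)) (hx : ∀ s ∈ S, 1 ≤ x s) (hy : ∀ s ∈ S, 1 ≤ y s)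
    (hsum : ∀ s ∈ S, x s + y s + d s = 2 * (b + 1))
    (hd : ∀ s ∈ S, orderBound (b + 1) ≤ 1 + d s + orderBound b)
    (hx1 : #{s ∈ S | x s = 1} ≤ 2 * (b + 1)) (hy1 : #{s ∈ S | y s = 1} ≤ 2 * (b + 1)) :
    b = 3 ∧ 12 ≤ #{s ∈ S | d s = 5} := by
  have hgap : orderBound b + 2 * b ≤ orderBound (b + 1) := by
    rcases eq_or_lt_of_le hb with rfl | hb3
    · decide
    · exact (orderBound_succ hb3).ge
  have hcount := card_filter_eq_one_add_card_filter_eq_one_add (S := S) (x := x) (y := y)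
    fun s hs => by have := hx s hs; have := hy s hs; have := hsum s hs; have := hd s hs; omega
  have h3 : #{s ∈ S | x s + y s = 3} ≤ #S := card_filter_le _ _
  obtain rfl | rfl | hb4 : b = 2 ∨ b = 3 ∨ 4 ≤ b := by omega
  · have : #{s ∈ S | x s + y s = 3} = 0 := card_eq_zero.2 <| filter_false_of_mem fun s hs => by
      have := hsum s hs; have := hd s hs; simp only [orderBound] at this; omega
    simp only [orderBound] at hS
    omega
  · refine ⟨rfl, ?_⟩
    have : #{s ∈ S | x s + y s = 3} ≤ #{s ∈ S | d s = 5} :=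
      card_le_card <| monotone_filter_right _ fun s hs h => by have := hsum s hs; omega
    simp only [orderBound] at hS
    omega
  · have := four_mul_lt_orderBound (k := b + 1) (by omega)
    omega

namespace SimpleGraph

variable {V : Type*} {G : SimpleGraph V}

theorem IndepSetFreeOn.card_lt {W t : Finset V} {k : ℕ} (hW : G.IndepSetFreeOn W k)
    (htW : t ⊆ W) (ht : G.IsIndepSet t) : #t < k := by
  by_contra! hk
  obtain ⟨u, hut, hu⟩ := exists_subset_card_eq hk
  exact hW (coe_subset.2 (hut.trans htW)) ⟨ht.mono (coe_subset.2 hut), hu⟩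

theorem IsClique.card_lt_of_cliqueFree {n : ℕ} {t : Finset V} (hG : G.CliqueFree n)
    (ht : G.IsClique t) : #t < n := by
  by_contra! hn
  obtain ⟨u, hut, hu⟩ := exists_subset_card_eq hn
  exact hG u ⟨ht.subset (coe_subset.2 hut), hu⟩

theorem isClique_of_indepSetFreeOn_two {W : Set V} (hW : G.IndepSetFreeOn W 2) :
    G.IsClique W := by
  classical
  intro x hx y hy hxy
  by_contra h
  refine hW (t := {x, y}) (by simp [Set.insert_subset_iff, hx, hy]) ⟨?_, card_pair hxy⟩
  simpa [Set.pairwise_pair, G.adj_comm] using fun _ => h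

theorem card_le_three_of_indepSetFreeOn_two {W : Finset V} (hG : G.CliqueFree 4)
    (hW : G.IndepSetFreeOn W 2) : #W ≤ 3 :=
  Nat.le_of_lt_succ ((isClique_of_indepSetFreeOn_two hW).card_lt_of_cliqueFree hG)

variable [DecidableEq V]

theorem IndepSetFreeOn.of_forall_not_adj {W C Z : Finset V} {n : ℕ}
    (hW : G.IndepSetFreeOn W (n + #C)) (hC : G.IsIndepSet C) (hCW : C ⊆ W) (hZW : Z ⊆ W)
    (hCZ : Disjoint C Z) (hadj : ∀ c ∈ C, ∀ z ∈ Z, ¬ G.Adj c z) : G.IndepSetFreeOn Z n := by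
  intro t htZ ht
  have htZ : t ⊆ Z := coe_subset.1 htZ
  refine hW (t := t ∪ C) (by simpa using ⟨htZ.trans hZW, hCW⟩) ⟨?_, ?_⟩
  · rw [coe_union, IsIndepSet, Set.pairwise_union]
    exact ⟨ht.isIndepSet, hC, fun z hz c hc _ =>
      ⟨fun h => hadj c hc z (htZ hz) h.symm, hadj c hc z (htZ hz)⟩⟩
  · rw [card_union_of_disjoint (disjoint_of_subset_left htZ hCZ.symm), ht.card_eq]

variable [DecidableRel G.Adj]

theorem IndepSetFreeOn.card_filter_adj_pos {W C : Finset V} {s : V}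
    (hW : G.IndepSetFreeOn W (#C + 1)) (hC : G.IsIndepSet C) (hCW : C ⊆ W) (hs : s ∈ W)
    (hsC : s ∉ C) : 0 < #{u ∈ C | G.Adj s u} := by
  by_contra! h
  simp only [nonpos_iff_eq_zero, card_eq_zero, filter_eq_empty_iff] at h
  refine hW (t := insert s C) (coe_subset.2 (insert_subset hs hCW)) ⟨?_, ?_⟩
  · rw [coe_insert, IsIndepSet, Set.pairwise_insert]
    exact ⟨hC, fun u hu _ => ⟨h hu, fun h' => h hu h'.symm⟩⟩
  · rw [card_insert_of_notMem hsC]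

theorem IndepSetFreeOn.filter_compl_adj {W : Finset V} {n : ℕ} {v : V}
    (hW : G.IndepSetFreeOn W (n + 1)) (hv : v ∈ W) :
    G.IndepSetFreeOn (↑{u ∈ W | Gᶜ.Adj v u}) n :=
  hW.of_forall_not_adj (C := {v}) (by simp) (by simpa) (filter_subset _ _)
    (by simp) (by simp +contextual)

theorem card_eq_one_add_card_filter_adj_add {W : Finset V} {v : V} (hv : v ∈ W) :
    #W = 1 + #{u ∈ W | G.Adj v u} + #{u ∈ W | Gᶜ.Adj v u} := by
  have hadj : {u ∈ W.erase v | G.Adj v u} = {u ∈ W | G.Adj v u} := by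
    ext u; simpa using fun h _ => (G.ne_of_adj h).symm
  have hnadj : {u ∈ W.erase v | ¬ G.Adj v u} = {u ∈ W | Gᶜ.Adj v u} := by
    ext u; simp only [mem_filter, mem_erase, compl_adj]; tauto
  rw [← card_erase_add_one hv, ← card_filter_add_card_filter_not (G.Adj v ·), hadj, hnadj]
  ring

theorem card_filter_adj_eq_add_of_not_adj (W : Finset V) {v s : V} (hvs : ¬ G.Adj v s) :
    #{u ∈ W | G.Adj s u} =
      #{u ∈ {w ∈ W | G.Adj v w} | G.Adj s u} + #{u ∈ {w ∈ W | Gᶜ.Adj v w} | G.Adj s u} := by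
  rw [← card_filter_add_card_filter_not (G.Adj v ·) (s := {u ∈ W | G.Adj s u}), filter_filter,
    filter_filter, filter_filter]
  congr 2
  · ext u; simp [and_comm]
  · ext u
    simp only [mem_filter, compl_adj]
    have : G.Adj s u → v ≠ u := by rintro h rfl; exact hvs h.symm
    tauto

theorem card_le_four_add_card_filter_adj {W : Finset V} {s : V} (hG : G.CliqueFree 4)
    (hW : G.IndepSetFreeOn W 3) (hs : s ∈ W) : #W ≤ 4 + #{u ∈ W | G.Adj s u} := by
  have := card_eq_one_add_card_filter_adj_add (G := G) hs
  have := card_le_three_of_indepSetFreeOn_two hG (hW.filter_compl_adj hs)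
  omega

theorem card_filter_forall_not_adj_le_three {W C T : Finset V} (hG : G.CliqueFree 4)
    (hW : G.IndepSetFreeOn W (2 + #C)) (hC : G.IsIndepSet C) (hCW : C ⊆ W) (hTW : T ⊆ W)
    (hCT : Disjoint C T) : #{s ∈ T | ∀ u ∈ C, ¬ G.Adj s u} ≤ 3 :=
  card_le_three_of_indepSetFreeOn_two hG <| hW.of_forall_not_adj hC hCW
    ((filter_subset _ _).trans hTW) (disjoint_of_subset_right (filter_subset _ _) hCT)
    fun c hc _ hs h => (mem_filter.1 hs).2 c hc h.symm

theorem card_filter_card_filter_adj_eq_one_le {W C S : Finset V} (hG : G.CliqueFree 4)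
    (hW : G.IndepSetFreeOn W (#C + 1)) (hC : G.IsIndepSet C) (hCW : C ⊆ W) (hSW : S ⊆ W)
    (hSC : Disjoint S C) : #{s ∈ S | #{u ∈ C | G.Adj s u} = 1} ≤ 2 * #C := by
  set Q : V → Finset V := fun u => {s ∈ S | {c ∈ C | G.Adj s c} = {u}}
  have hsub : {s ∈ S | #{u ∈ C | G.Adj s u} = 1} ⊆ C.biUnion Q := by
    intro s hs
    obtain ⟨hsS, hs1⟩ := mem_filter.1 hs
    obtain ⟨u, hu⟩ := card_eq_one.1 hs1
    exact mem_biUnion.2 ⟨u, mem_of_mem_filter u (hu ▸ mem_singleton_self u), mem_filter.2 ⟨hsS, hu⟩⟩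
  have hQ : ∀ u ∈ C, #(Q u) ≤ 2 := by
    intro u hu
    have hQS : Q u ⊆ S := filter_subset _ _
    have hadj : ∀ s ∈ Q u, ∀ c ∈ C, G.Adj s c ↔ c = u := fun s hs c hc => by
      rw [← mem_singleton, ← (mem_filter.1 hs).2, mem_filter, and_iff_right hc]
    -- two non-adjacent vertices of `Q u` together with `C.erase u` would be independent
    have hW' : G.IndepSetFreeOn W (2 + #(C.erase u)) := by
      convert hW using 1; have := card_erase_add_one hu; omega
    have hfree : G.IndepSetFreeOn (Q u) 2 :=
      hW'.of_forall_not_adj (hC.mono (coe_subset.2 (erase_subset _ _)))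
        ((erase_subset _ _).trans hCW) (hQS.trans hSW)
        (disjoint_of_subset_left (erase_subset _ _) (hSC.symm.mono_right hQS))
        (fun c hc s hs h => (mem_erase.1 hc).1 ((hadj s hs c (mem_of_mem_erase hc)).1 h.symm))
    have huQ : u ∉ Q u := fun h => Finset.disjoint_left.1 hSC (hQS h) hu
    have hclique : G.IsClique (insert u (Q u) : Finset V) := by
      rw [coe_insert, isClique_insert_of_notMem (by simpa using huQ)]
      exact ⟨isClique_of_indepSetFreeOn_two hfree, fun s hs => ((hadj s hs u hu).2 rfl).symm⟩
    have := hclique.card_lt_of_cliqueFree hG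
    rw [card_insert_of_notMem huQ] at this
    omega
  calc _ ≤ #(C.biUnion Q) := card_le_card hsub
    _ ≤ ∑ u ∈ C, #(Q u) := card_biUnion_le
    _ ≤ #C • 2 := sum_le_card_nsmul _ _ _ hQ
    _ = 2 * #C := by rw [smul_eq_mul, mul_comm]

theorem card_filter_card_filter_adj_eq_five_le {S C D : Finset V} {v : V}
    (hG : G.CliqueFree 4) (hS : G.IndepSetFreeOn S 4) (hS14 : #S = 14) (hv : v ∈ S)
    (hN : {u ∈ S | G.Adj v u} = C ∪ D) (hCD : Disjoint C D) (hC : G.IsIndepSet C)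
    (hD : G.IsIndepSet D) (hC3 : #C = 3) (hD2 : #D = 2) :
    #{s ∈ S | #{u ∈ S | G.Adj s u} = 5} ≤ 9 := by
  set S' := {u ∈ S | Gᶜ.Adj v u}
  have hCN : C ⊆ {u ∈ S | G.Adj v u} := hN ▸ subset_union_left
  have hDN : D ⊆ {u ∈ S | G.Adj v u} := hN ▸ subset_union_right
  have hNS' : ∀ s ∈ S', s ∉ {u ∈ S | G.Adj v u} := fun s hs h =>
    ((compl_adj G v s).1 (mem_filter.1 hs).2).2 (mem_filter.1 h).2
  have hS'8 : #S' = 8 := by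
    have : #S = 1 + #{u ∈ S | G.Adj v u} + #S' := card_eq_one_add_card_filter_adj_add hv
    rw [hN, card_union_of_disjoint hCD] at this
    omega
  set Z := {s ∈ S' | ∀ u ∈ D, ¬ G.Adj s u}
  have hZ : #Z ≤ 3 := card_filter_forall_not_adj_le_three hG (by rwa [hD2]) hD
    (hDN.trans (filter_subset _ _)) (filter_subset _ _)
    (disjoint_of_subset_left hDN (Finset.disjoint_right.2 hNS'))
  -- a non-neighbour of `v` of degree 5 has a neighbour in `C` and 4 in `S'`, hence none in `D`
  have hsub : {s ∈ S | #{u ∈ S | G.Adj s u} = 5} ⊆ insert v (C ∪ D ∪ Z) := by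
    intro s hs
    obtain ⟨hsS, hs5⟩ := mem_filter.1 hs
    rcases eq_or_ne s v with rfl | hsv
    · exact mem_insert_self _ _
    by_cases hvs : G.Adj v s
    · rw [mem_insert, mem_union, ← hN]
      exact Or.inr (Or.inl (mem_filter.2 ⟨hsS, hvs⟩))
    have hsS' : s ∈ S' := mem_filter.2 ⟨hsS, (compl_adj G v s).2 ⟨hsv.symm, hvs⟩⟩
    have hdec : _ = _ + #{u ∈ S' | G.Adj s u} := card_filter_adj_eq_add_of_not_adj S hvs
    rw [hN, filter_union, card_union_of_disjoint (disjoint_filter_filter hCD)] at hdec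
    have hSC : G.IndepSetFreeOn S (#C + 1) := by rwa [hC3]
    have hCs := hSC.card_filter_adj_pos hC (hCN.trans (filter_subset _ _)) hsS
      fun h => hNS' s hsS' (hCN h)
    have hD0 : #{u ∈ D | G.Adj s u} = 0 := by
      have hS'free : G.IndepSetFreeOn S' 3 := hS.filter_compl_adj hv
      have := card_le_four_add_card_filter_adj hG hS'free hsS'
      omega
    simp only [card_eq_zero, filter_eq_empty_iff] at hD0
    exact mem_insert_of_mem (mem_union_right _ (mem_filter.2 ⟨hsS', fun u hu => hD0 hu⟩))
  calc _ ≤ #(insert v (C ∪ D ∪ Z)) := card_le_card hsub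
    _ ≤ #(C ∪ D ∪ Z) + 1 := card_insert_le _ _
    _ ≤ #C + #D + #Z + 1 := by grw [card_union_le, card_union_le]
    _ ≤ 9 := by omega

end SimpleGraph

open SimpleGraph

section Oriented

variable {V : Type*} {E : V → V → Prop}

def TransTriangleFree (E : V → V → Prop) : Prop :=
  ∀ a b c, E a b → E b c → ¬ E a c

theorem TransTriangleFree.cyclic (hT : TransTriangleFree E) {a b c : V} (hab : E a b)
    (hbc : E b c ∨ E c b) (hac : E a c ∨ E c a) : E b c ∧ E c a := by
  rcases hbc with hbc | hcb <;> rcases hac with hac | hca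
  · exact (hT a b c hab hbc hac).elim
  · exact ⟨hbc, hca⟩
  · exact (hT a c b hac hcb hab).elim
  · exact (hT c a b hca hab hcb).elim

theorem IsOriented.fromRel_adj (hE : IsOriented E) {x y : V} :
    (fromRel E).Adj x y ↔ E x y ∨ E y x := by
  rw [SimpleGraph.fromRel_adj, and_iff_right_iff_imp]
  rintro h rfl
  exact h.elim (fun h => hE _ _ h h) (fun h => hE _ _ h h)

theorem IsOriented.cliqueFree_four (hE : IsOriented E) (hT : TransTriangleFree E) :
    (fromRel E).CliqueFree 4 := by
  classical
  have key : ∀ {a b c d : V}, E a b → (fromRel E).Adj a c → (fromRel E).Adj a d →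
      (fromRel E).Adj b c → (fromRel E).Adj b d → (fromRel E).Adj c d → False := by
    intro a b c d hab hac had hbc hbd hcd
    simp only [hE.fromRel_adj] at hac had hbc hbd hcd
    obtain ⟨hbc, -⟩ := hT.cyclic hab hbc hac
    obtain ⟨hbd, -⟩ := hT.cyclic hab hbd had
    exact hE _ _ hbd (hT.cyclic hbc hcd (Or.inl hbd)).2
  intro s hs
  obtain ⟨a, b, c, d, hab, hac, had, hbc, hbd, hcd, hs_eq⟩ := card_eq_four.1 hs.card_eq
  have adj : ∀ x ∈ s, ∀ y ∈ s, x ≠ y → (fromRel E).Adj x y := fun x hx y hy => hs.1 hx hy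
  simp only [hs_eq, mem_insert, mem_singleton] at adj
  rcases hE.fromRel_adj.1 (adj a (by simp) b (by simp) hab) with h | h
  · exact key h (adj a (by simp) c (by simp) hac) (adj a (by simp) d (by simp) had)
      (adj b (by simp) c (by simp) hbc) (adj b (by simp) d (by simp) hbd)
      (adj c (by simp) d (by simp) hcd)
  · exact key h (adj b (by simp) c (by simp) hbc) (adj b (by simp) d (by simp) hbd)
      (adj a (by simp) c (by simp) hac) (adj a (by simp) d (by simp) had)
      (adj c (by simp) d (by simp) hcd)

theorem IsOriented.indepSetFreeOn_univ_of_not_hasIndep [Fintype V] (hE : IsOriented E) {m : ℕ}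
    (h : ¬ HasIndep E m) : (fromRel E).IndepSetFreeOn (↑(univ : Finset V)) m := by
  intro t _ ht
  refine h ⟨t, ht.card_eq, fun x hx y hy hxy => ?_⟩
  obtain rfl | hne := eq_or_ne x y
  · exact hE x x hxy hxy
  · exact ht.isIndepSet hx hy hne ((SimpleGraph.fromRel_adj _ _ _).2 ⟨hne, Or.inl hxy⟩)

variable [DecidableRel E]

theorem TransTriangleFree.isIndepSet_filter_rel (hT : TransTriangleFree E) (W : Finset V)
    (v : V) : (fromRel E).IsIndepSet ↑{u ∈ W | E v u} := by
  intro x hx y hy _ hxy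
  simp only [mem_coe, mem_filter] at hx hy
  rcases ((SimpleGraph.fromRel_adj _ _ _).1 hxy).2 with h | h
  · exact hT v x y hx.2 h hy.2
  · exact hT v y x hy.2 h hx.2

theorem TransTriangleFree.isIndepSet_filter_rel' (hT : TransTriangleFree E) (W : Finset V)
    (v : V) : (fromRel E).IsIndepSet ↑{u ∈ W | E u v} := by
  intro x hx y hy _ hxy
  simp only [mem_coe, mem_filter] at hx hy
  rcases ((SimpleGraph.fromRel_adj _ _ _).1 hxy).2 with h | h
  · exact hT x y v h hy.2 hx.2
  · exact hT y x v h hx.2 hy.2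

theorem TransTriangleFree.card_filter_rel_lt (hT : TransTriangleFree E) {W : Finset V} {k : ℕ}
    (hW : (fromRel E).IndepSetFreeOn W k) (v : V) :
    #{u ∈ W | E v u} < k ∧ #{u ∈ W | E u v} < k :=
  ⟨hW.card_lt (filter_subset _ _) (hT.isIndepSet_filter_rel W v),
    hW.card_lt (filter_subset _ _) (hT.isIndepSet_filter_rel' W v)⟩

theorem IsOriented.disjoint_filter_rel (hE : IsOriented E) (W : Finset V) (v : V) :
    Disjoint {u ∈ W | E v u} {u ∈ W | E u v} :=
  disjoint_filter.2 fun _ _ h h' => hE _ _ h h'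

theorem sum_card_filter_rel_add_card_filter_rel [Fintype V] :
    ∑ v, (#{u | E v u} + #{u | E u v}) = 2 * Nat.card {p : V × V // E p.1 p.2} := by
  rw [Nat.card_eq_fintype_card, Fintype.card_subtype, sum_add_distrib, two_mul, card_filter,
    Fintype.sum_prod_type]
  congr 1
  · simp only [card_filter]
  · rw [sum_comm]; simp only [card_filter]

variable [DecidableEq V]

namespace IsOriented

theorem filter_fromRel_adj_eq_union (hE : IsOriented E) (W : Finset V) (v : V) :
    {u ∈ W | (fromRel E).Adj v u} = {u ∈ W | E v u} ∪ {u ∈ W | E u v} := by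
  rw [← filter_or]
  exact filter_congr fun u _ => hE.fromRel_adj

theorem card_filter_fromRel_adj (hE : IsOriented E) (W : Finset V) (v : V) :
    #{u ∈ W | (fromRel E).Adj v u} = #{u ∈ W | E v u} + #{u ∈ W | E u v} := by
  rw [hE.filter_fromRel_adj_eq_union, card_union_of_disjoint (hE.disjoint_filter_rel W v)]

theorem card_eq_one_add_card_filter_rel_add (hE : IsOriented E) {W : Finset V} {v : V}
    (hv : v ∈ W) :
    #W = 1 + #{u ∈ W | E v u} + #{u ∈ W | E u v} + #{u ∈ W | (fromRel E)ᶜ.Adj v u} := by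
  rw [card_eq_one_add_card_filter_adj_add (G := fromRel E) hv, hE.card_filter_fromRel_adj]
  ring

theorem card_filter_fromRel_adj_eq_add_add (hE : IsOriented E) (W : Finset V) {v s : V}
    (hvs : ¬ (fromRel E).Adj v s) :
    #{u ∈ W | (fromRel E).Adj s u} = #{u ∈ {w ∈ W | E v w} | (fromRel E).Adj s u} +
      #{u ∈ {w ∈ W | E w v} | (fromRel E).Adj s u} +
      #{u ∈ {w ∈ W | (fromRel E)ᶜ.Adj v w} | (fromRel E).Adj s u} := by
  rw [card_filter_adj_eq_add_of_not_adj W hvs, hE.filter_fromRel_adj_eq_union W v, filter_union,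
    card_union_of_disjoint (disjoint_filter_filter (hE.disjoint_filter_rel W v))]

theorem card_le_of_indepSetFreeOn_succ (hE : IsOriented E) (hT : TransTriangleFree E)
    {W : Finset V} {a N : ℕ} (hW : (fromRel E).IndepSetFreeOn W (a + 1))
    (hN : ∀ Z : Finset V, (fromRel E).IndepSetFreeOn Z a → #Z ≤ N) : #W ≤ 2 * a + 1 + N := by
  obtain rfl | ⟨v, hv⟩ := W.eq_empty_or_nonempty
  · simp
  have := hE.card_eq_one_add_card_filter_rel_add hv
  have := hT.card_filter_rel_lt hW v
  have := hN _ (hW.filter_compl_adj hv)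
  omega

theorem card_filter_rel_eq_of_card_eq (hE : IsOriented E) (hT : TransTriangleFree E)
    {W : Finset V} {a N : ℕ} (hW : (fromRel E).IndepSetFreeOn W (a + 1))
    (hN : ∀ Z : Finset V, (fromRel E).IndepSetFreeOn Z a → #Z ≤ N)
    (hcard : #W = 2 * a + 1 + N) : ∀ v ∈ W,
    #{u ∈ W | E v u} = a ∧ #{u ∈ W | E u v} = a ∧ #{u ∈ W | (fromRel E)ᶜ.Adj v u} = N := by
  intro v hv
  have := hE.card_eq_one_add_card_filter_rel_add hv
  have := hT.card_filter_rel_lt hW v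
  have := hN _ (hW.filter_compl_adj hv)
  omega

theorem card_filter_card_filter_fromRel_adj_eq_five_le (hE : IsOriented E)
    (hT : TransTriangleFree E) {S : Finset V} (hS : (fromRel E).IndepSetFreeOn S 4)
    (hS14 : #S = 14) : #{s ∈ S | #{u ∈ S | (fromRel E).Adj s u} = 5} ≤ 9 := by
  obtain h | ⟨v, hv⟩ := ({s ∈ S | #{u ∈ S | (fromRel E).Adj s u} = 5}).eq_empty_or_nonempty
  · rw [h, card_empty]; omega
  obtain ⟨hvS, hv5⟩ := mem_filter.1 hv
  have hN := hE.filter_fromRel_adj_eq_union S v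
  have := hE.card_filter_fromRel_adj S v
  have := hT.card_filter_rel_lt hS v
  by_cases h3 : #{u ∈ S | E v u} = 3
  · exact card_filter_card_filter_adj_eq_five_le (hE.cliqueFree_four hT) hS hS14 hvS hN
      (hE.disjoint_filter_rel S v) (hT.isIndepSet_filter_rel S v)
      (hT.isIndepSet_filter_rel' S v) h3 (by omega)
  · exact card_filter_card_filter_adj_eq_five_le (hE.cliqueFree_four hT) hS hS14 hvS
      (hN.trans (union_comm _ _)) (hE.disjoint_filter_rel S v).symm
      (hT.isIndepSet_filter_rel' S v) (hT.isIndepSet_filter_rel S v) (by omega) (by omega)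

theorem disjoint_filter_compl_adj_filter_rel (hE : IsOriented E) (W : Finset V) (v : V) :
    Disjoint {u ∈ W | (fromRel E)ᶜ.Adj v u} {u ∈ W | E v u} ∧
      Disjoint {u ∈ W | (fromRel E)ᶜ.Adj v u} {u ∈ W | E u v} :=
  ⟨disjoint_filter.2 fun _ _ h h' => ((compl_adj _ _ _).1 h).2 (hE.fromRel_adj.2 (Or.inl h')),
    disjoint_filter.2 fun _ _ h h' => ((compl_adj _ _ _).1 h).2 (hE.fromRel_adj.2 (Or.inr h'))⟩

theorem eq_three_and_twelve_le_card_filter_of_card_eq (hE : IsOriented E)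
    (hT : TransTriangleFree E) {b : ℕ} (hb : 2 ≤ b) {W : Finset V}
    (hW : (fromRel E).IndepSetFreeOn W (b + 2))
    (hb1 : ∀ Z : Finset V, (fromRel E).IndepSetFreeOn Z (b + 1) → #Z ≤ orderBound (b + 1))
    (hb0 : ∀ Z : Finset V, (fromRel E).IndepSetFreeOn Z b → #Z ≤ orderBound b)
    (hcard : #W = 2 * (b + 1) + 1 + orderBound (b + 1)) {v : V} (hv : v ∈ W) :
    b = 3 ∧ 12 ≤ #{s ∈ {u ∈ W | (fromRel E)ᶜ.Adj v u} |
      #{u ∈ {u ∈ W | (fromRel E)ᶜ.Adj v u} | (fromRel E).Adj s u} = 5} := by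
  have hreg := hE.card_filter_rel_eq_of_card_eq hT hW hb1 hcard
  obtain ⟨hA, hB, hS⟩ := hreg v hv
  set A := {u ∈ W | E v u}
  set B := {u ∈ W | E u v}
  set S := {u ∈ W | (fromRel E)ᶜ.Adj v u}
  obtain ⟨hSA, hSB⟩ : Disjoint S A ∧ Disjoint S B := hE.disjoint_filter_compl_adj_filter_rel W v
  have hSfree : (fromRel E).IndepSetFreeOn S (b + 1) := hW.filter_compl_adj hv
  have hWA : (fromRel E).IndepSetFreeOn W (#A + 1) := by rwa [hA]
  have hWB : (fromRel E).IndepSetFreeOn W (#B + 1) := by rwa [hB]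
  have hx : ∀ s ∈ S, 1 ≤ #{u ∈ A | (fromRel E).Adj s u} := fun s hs =>
    hWA.card_filter_adj_pos (hT.isIndepSet_filter_rel W v) (filter_subset _ _)
      (mem_of_mem_filter s hs) (Finset.disjoint_left.1 hSA hs)
  have hy : ∀ s ∈ S, 1 ≤ #{u ∈ B | (fromRel E).Adj s u} := fun s hs =>
    hWB.card_filter_adj_pos (hT.isIndepSet_filter_rel' W v) (filter_subset _ _)
      (mem_of_mem_filter s hs) (Finset.disjoint_left.1 hSB hs)
  have hsum : ∀ s ∈ S, #{u ∈ A | (fromRel E).Adj s u} + #{u ∈ B | (fromRel E).Adj s u} +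
      #{u ∈ S | (fromRel E).Adj s u} = 2 * (b + 1) := fun s hs => by
    have hdec : #{u ∈ W | (fromRel E).Adj s u} = #{u ∈ A | (fromRel E).Adj s u} +
        #{u ∈ B | (fromRel E).Adj s u} + #{u ∈ S | (fromRel E).Adj s u} :=
      hE.card_filter_fromRel_adj_eq_add_add W ((compl_adj _ _ _).1 (mem_filter.1 hs).2).2
    have := hE.card_filter_fromRel_adj W s
    have := hreg s (mem_of_mem_filter s hs)
    omega
  have hd : ∀ s ∈ S, orderBound (b + 1) ≤ 1 + #{u ∈ S | (fromRel E).Adj s u} + orderBound b :=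
    fun s hs => by
      have := card_eq_one_add_card_filter_adj_add (G := fromRel E) hs
      have := hb0 _ (hSfree.filter_compl_adj hs)
      omega
  have hxA := card_filter_card_filter_adj_eq_one_le (hE.cliqueFree_four hT) hWA
    (hT.isIndepSet_filter_rel W v) (filter_subset _ _) (filter_subset _ _) hSA
  have hyB := card_filter_card_filter_adj_eq_one_le (hE.cliqueFree_four hT) hWB
    (hT.isIndepSet_filter_rel' W v) (filter_subset _ _) (filter_subset _ _) hSB
  rw [hA] at hxA
  rw [hB] at hyB
  exact eq_three_and_twelve_le_card_filter hb hS hx hy hsum hd hxA hyB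

theorem card_le_orderBound_add_two (hE : IsOriented E) (hT : TransTriangleFree E) {b : ℕ}
    (hb : 2 ≤ b) {W : Finset V} (hW : (fromRel E).IndepSetFreeOn W (b + 2))
    (hb1 : ∀ Z : Finset V, (fromRel E).IndepSetFreeOn Z (b + 1) → #Z ≤ orderBound (b + 1))
    (hb0 : ∀ Z : Finset V, (fromRel E).IndepSetFreeOn Z b → #Z ≤ orderBound b) :
    #W ≤ orderBound (b + 2) := by
  have hle := hE.card_le_of_indepSetFreeOn_succ hT hW hb1
  have hF : orderBound (b + 2) = orderBound (b + 1) + 2 * (b + 1) := orderBound_succ (by omega)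
  by_contra! hlt
  have hcard : #W = 2 * (b + 1) + 1 + orderBound (b + 1) := by omega
  obtain ⟨v, hv⟩ : W.Nonempty := card_pos.1 (by omega)
  obtain ⟨rfl, h12⟩ := hE.eq_three_and_twelve_le_card_filter_of_card_eq hT hb hW hb1 hb0 hcard hv
  have hS := (hE.card_filter_rel_eq_of_card_eq hT hW hb1 hcard v hv).2.2
  have := hE.card_filter_card_filter_fromRel_adj_eq_five_le hT (hW.filter_compl_adj hv)
    (by rw [hS]; rfl)
  omega

theorem card_le_orderBound (hE : IsOriented E) (hT : TransTriangleFree E) :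
    ∀ {k : ℕ} {W : Finset V}, (fromRel E).IndepSetFreeOn W k → #W ≤ orderBound k
  | 0, _, hW => (hW (empty_subset _) ⟨by simp, rfl⟩).elim
  | 1, W, hW => by
    by_contra! h
    obtain ⟨v, hv⟩ := card_pos.1 (pos_of_gt h)
    exact hW (t := {v}) (by simpa) ⟨by simp, rfl⟩
  | 2, _, hW => card_le_three_of_indepSetFreeOn_two (hE.cliqueFree_four hT) hW
  | 3, _, hW => hE.card_le_of_indepSetFreeOn_succ hT hW fun _ => hE.card_le_orderBound hT
  | b + 4, _, hW => hE.card_le_orderBound_add_two hT (b := b + 2) (by omega) hW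
      (fun _ => hE.card_le_orderBound hT) (fun _ => hE.card_le_orderBound hT)

end IsOriented

end Oriented

theorem stmt13 {V : Type*} [Fintype V] (E : V → V → Prop) (m : ℕ)
    (hm : 3 ≤ m)
    (hcard : Fintype.card V = m * m - m + 2)
    (hor : IsOriented E)
    (hIm : ¬ HasIndep E m)
    (hL3 : ¬ ∃ a b c : V, E a b ∧ E b c ∧ E a c) :
    (m * m - m + 2) * (2 * m - 3) / 2 ≤ Nat.card {p : V × V // E p.1 p.2} := by
  classical
  have hT : TransTriangleFree E := fun a b c hab hbc hac => hL3 ⟨a, b, c, hab, hbc, hac⟩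
  have hW := hor.indepSetFreeOn_univ_of_not_hasIndep hIm
  obtain ⟨j, rfl⟩ : ∃ j, m = j + 3 := ⟨m - 3, by omega⟩
  have hdeg : ∀ v : V, 2 * (j + 3) - 3 ≤ #{u | E v u} + #{u | E u v} := fun v => by
    have hpart := hor.card_eq_one_add_card_filter_rel_add (mem_univ v)
    have hnon := hor.card_le_orderBound hT (hW.filter_compl_adj (n := j + 2) (mem_univ v))
    have : orderBound (j + 2) ≤ (j + 2) * (j + 1) + 2 := orderBound_succ_le (j + 1)
    have : (j + 3) * (j + 3) = (j + 2) * (j + 1) + 3 * j + 7 := by ring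
    rw [card_univ, hcard] at hpart
    omega
  have hsum := sum_le_sum fun v (_ : v ∈ univ) => hdeg v
  rw [sum_const, card_univ, hcard, smul_eq_mul, sum_card_filter_rel_add_card_filter_rel] at hsum
  exact Nat.div_le_of_le_mul hsum
end

section
/- The oriented Cayley graph on Z/22Z with connection set {+1, +4, −5, +10} (edges x → x+1, x → x+4, x → x−5, x → x+10 for all x) contains no independent set of size 5 and no transitive tournament on 3 vertices. Consequently r(I_5, L_3) > 22. -/
/-- `r(I_m, L_n)`: the least `k` such that every oriented graph on `k` vertices
contains an independent set of size `m` or a transitive tournament on `n` vertices. -/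
noncomputable def ramseyIL (m n : ℕ) : ℕ :=
  sInf {k | ∀ (V : Type) (_ : Fintype V), Fintype.card V = k →
    ∀ E : V → V → Prop, IsOriented E → HasIndep E m ∨ HasTransTour E n}

/-- The oriented Cayley graph on ℤ/22ℤ with connection set {+1, +4, −5, +10}. -/
def E22 (x y : ZMod 22) : Prop := y - x = 1 ∨ y - x = 4 ∨ y - x = 17 ∨ y - x = 10

section Indep

variable {V : Type*}

def IsIndep (E : V → V → Prop) (s : Finset V) : Prop := ∀ x ∈ s, ∀ y ∈ s, ¬E x y

variable {E : V → V → Prop}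

theorem IsIndep.mono {s t : Finset V} (ht : IsIndep E t) (hst : s ⊆ t) : IsIndep E s :=
  fun x hx y hy => ht x (hst hx) y (hst hy)

variable [DecidableRel E]

theorem isIndep_filter_rel (hT : ∀ a b c, E a b → E b c → ¬E a c) (s : Finset V) (v : V) :
    IsIndep E (s.filter (E v)) := fun x hx y hy hxy =>
  hT v x y (Finset.mem_filter.mp hx).2 hxy (Finset.mem_filter.mp hy).2

theorem isIndep_filter_rel_flip (hT : ∀ a b c, E a b → E b c → ¬E a c) (s : Finset V) (v : V) :
    IsIndep E (s.filter (E · v)) := fun x hx y hy hxy =>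
  hT x y v hxy (Finset.mem_filter.mp hy).2 (Finset.mem_filter.mp hx).2

variable [DecidableEq V]

variable (E) in
def nonNbrs (s : Finset V) (v : V) : Finset V :=
  s.filter fun y => y ≠ v ∧ ¬E v y ∧ ¬E y v

theorem IsIndep.erase_subset_nonNbrs {s t : Finset V} (hs : IsIndep E s) (hst : s ⊆ t) {v : V}
    (hv : v ∈ s) : s.erase v ⊆ nonNbrs E t v := by
  intro y hy
  obtain ⟨hyv, hys⟩ := Finset.mem_erase.mp hy
  exact Finset.mem_filter.mpr ⟨hst hys, hyv, hs v hv y hys, hs y hys v hv⟩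

theorem IsIndep.insert_of_subset_nonNbrs {s t : Finset V} {v : V} (ht : IsIndep E t)
    (hv : ¬E v v) (hts : t ⊆ nonNbrs E s v) : IsIndep E (insert v t) := by
  have hnbr : ∀ y ∈ t, ¬E v y ∧ ¬E y v := fun y hy => (Finset.mem_filter.mp (hts hy)).2.2
  simp only [IsIndep, Finset.forall_mem_insert]
  exact ⟨⟨hv, fun y hy => (hnbr y hy).1⟩, fun x hx => ⟨(hnbr x hx).2, ht x hx⟩⟩

theorem card_le_card_nonNbrs (s : Finset V) (v : V) :
    s.card ≤ 1 + (s.filter (E v)).card + (s.filter (E · v)).card + (nonNbrs E s v).card :=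
  calc s.card ≤ ({v} ∪ s.filter (E v) ∪ s.filter (E · v) ∪ nonNbrs E s v).card :=
        Finset.card_le_card fun y hy => by
          simp only [nonNbrs, Finset.mem_union, Finset.mem_singleton, Finset.mem_filter]
          tauto
    _ ≤ _ := by
        grw [Finset.card_union_le, Finset.card_union_le, Finset.card_union_le,
          Finset.card_singleton]

theorem exists_isIndep_of_mul_self_le (hT : ∀ a b c, E a b → E b c → ¬E a c) :
    ∀ (m : ℕ) (s : Finset V), m * m ≤ s.card → ∃ t ⊆ s, t.card = m ∧ IsIndep E t
  | 0, s, _ => ⟨∅, s.empty_subset, rfl, by simp [IsIndep]⟩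
  | m + 1, s, hs => by
    obtain ⟨v, hv⟩ := s.card_pos.mp (by nlinarith)
    by_cases hout : m + 1 ≤ (s.filter (E v)).card
    · obtain ⟨t, hts, htc⟩ := Finset.exists_subset_card_eq hout
      exact ⟨t, hts.trans (s.filter_subset _), htc, (isIndep_filter_rel hT s v).mono hts⟩
    by_cases hin : m + 1 ≤ (s.filter (E · v)).card
    · obtain ⟨t, hts, htc⟩ := Finset.exists_subset_card_eq hin
      exact ⟨t, hts.trans (s.filter_subset _), htc, (isIndep_filter_rel_flip hT s v).mono hts⟩
    obtain ⟨t, hts, htc, ht⟩ := exists_isIndep_of_mul_self_le hT m (nonNbrs E s v)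
      (by nlinarith [card_le_card_nonNbrs (E := E) s v])
    have hvt : v ∉ t := fun h => (Finset.mem_filter.mp (hts h)).2.1 rfl
    refine ⟨insert v t, Finset.insert_subset hv (hts.trans (s.filter_subset _)), ?_,
      ht.insert_of_subset_nonNbrs (fun h => hT v v v h h h) hts⟩
    rw [Finset.card_insert_of_notMem hvt, htc]

variable (E) in
def IndepFreeOn : ℕ → Finset V → Prop
  | 0, _ => False
  | k + 1, t => ∀ v ∈ t, IndepFreeOn k (nonNbrs E t v)

instance IndepFreeOn.decidable : ∀ k t, Decidable (IndepFreeOn E k t)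
  | 0, _ => isFalse id
  | k + 1, t =>
    have := fun t => IndepFreeOn.decidable k t
    inferInstanceAs (Decidable (∀ v ∈ t, _))

theorem IndepFreeOn.card_ne {k : ℕ} {t s : Finset V} (h : IndepFreeOn E k t) (hst : s ⊆ t)
    (hs : IsIndep E s) : s.card ≠ k := by
  induction k generalizing s t with
  | zero => exact h.elim
  | succ k ih =>
    intro hcard
    obtain ⟨v, hv⟩ := s.card_pos.mp (by omega)
    exact ih (h v (hst hv)) (hs.erase_subset_nonNbrs hst hv) (hs.mono (s.erase_subset v))
      (by rw [Finset.card_erase_of_mem hv, hcard, Nat.add_sub_cancel])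

end Indep

theorem not_hasIndep_of_indepFreeOn_nonNbrs_zero {G : Type*} [AddGroup G] [Fintype G]
    [DecidableEq G] {E : G → G → Prop} [DecidableRel E] (hE : ∀ a x y, E (x + a) (y + a) ↔ E x y)
    {k : ℕ} (h : IndepFreeOn E k (nonNbrs E Finset.univ 0)) : ¬HasIndep E (k + 1) := by
  rintro ⟨s, hcard, hs⟩
  obtain ⟨a, ha⟩ := s.card_pos.mp (by omega)
  set s' := s.map (Equiv.addRight (-a)).toEmbedding
  have hs' : IsIndep E s' := by
    simp only [s', IsIndep, Finset.forall_mem_map]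
    exact fun x hx y hy => (hE (-a) x y).not.mpr (hs x hx y hy)
  have h0 : (0 : G) ∈ s' := Finset.mem_map.mpr ⟨a, ha, add_neg_cancel a⟩
  refine h.card_ne (hs'.erase_subset_nonNbrs (Finset.subset_univ _) h0)
    (hs'.mono (s'.erase_subset 0)) ?_
  rw [Finset.card_erase_of_mem h0, Finset.card_map, hcard, Nat.add_sub_cancel]

section Oriented

variable {V W : Type*} {E : V → V → Prop}

theorem IsOriented.irrefl (hE : IsOriented E) (x : V) : ¬E x x := fun h => hE x x h h

theorem hasTransTour_of_forall_lt (hE : IsOriented E) {n : ℕ} (f : Fin n → V)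
    (hf : ∀ i j, i < j → E (f i) (f j)) : HasTransTour E n := by
  refine ⟨⟨f, fun i j hij => ?_⟩, hf⟩
  by_contra hne
  rcases lt_or_gt_of_ne hne with h | h
  · exact hE.irrefl _ (hij ▸ hf i j h)
  · exact hE.irrefl _ (hij ▸ hf j i h)

theorem hasTransTour_three_iff (hE : IsOriented E) :
    HasTransTour E 3 ↔ ∃ a b c, E a b ∧ E b c ∧ E a c := by
  constructor
  · rintro ⟨f, hf⟩
    exact ⟨f 0, f 1, f 2, hf 0 1 (by decide), hf 1 2 (by decide), hf 0 2 (by decide)⟩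
  · rintro ⟨a, b, c, hab, hbc, hac⟩
    exact hasTransTour_of_forall_lt hE ![a, b, c]
      (by intro i j hij; fin_cases i <;> fin_cases j <;> simp_all)

theorem HasIndep.of_embedding {m : ℕ} (f : W ↪ V) (h : HasIndep (fun x y => E (f x) (f y)) m) :
    HasIndep E m := by
  obtain ⟨s, hcard, hs⟩ := h
  refine ⟨s.map f, by rw [Finset.card_map, hcard], ?_⟩
  simpa only [Finset.forall_mem_map] using hs

theorem HasTransTour.of_embedding {n : ℕ} (f : W ↪ V)
    (h : HasTransTour (fun x y => E (f x) (f y)) n) : HasTransTour E n := by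
  obtain ⟨g, hg⟩ := h
  exact ⟨g.trans f, hg⟩

end Oriented

section RamseyIL

def IsRamseyILBound (m n k : ℕ) : Prop :=
  ∀ (V : Type) (_ : Fintype V), Fintype.card V = k →
    ∀ E : V → V → Prop, IsOriented E → HasIndep E m ∨ HasTransTour E n

variable {W : Type} [Fintype W] {E : W → W → Prop} {m n : ℕ}

theorem not_isRamseyILBound_of_le (hE : IsOriented E) (hI : ¬HasIndep E m)
    (hT : ¬HasTransTour E n) {k : ℕ} (hk : k ≤ Fintype.card W) : ¬IsRamseyILBound m n k := by
  intro hbound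
  obtain ⟨f⟩ := Function.Embedding.nonempty_of_card_le (α := Fin k) (β := W) (by simpa using hk)
  rcases hbound (Fin k) inferInstance (Fintype.card_fin k) _ (fun x y => hE (f x) (f y)) with h | h
  · exact hI (h.of_embedding f)
  · exact hT (h.of_embedding f)

theorem card_lt_ramseyIL {k₀ : ℕ} (hk₀ : IsRamseyILBound m n k₀) (hE : IsOriented E)
    (hI : ¬HasIndep E m) (hT : ¬HasTransTour E n) : Fintype.card W < ramseyIL m n := by
  by_contra! hle
  exact not_isRamseyILBound_of_le hE hI hT hle
    (Nat.sInf_mem (s := {k | IsRamseyILBound m n k}) ⟨k₀, hk₀⟩)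

theorem isRamseyILBound_mul_self_three (m : ℕ) : IsRamseyILBound m 3 (m * m) := by
  intro V _ hcard E hE
  classical
  by_cases hT : ∃ a b c, E a b ∧ E b c ∧ E a c
  · exact .inr ((hasTransTour_three_iff hE).mpr hT)
  · push Not at hT
    obtain ⟨t, -, htc, ht⟩ := exists_isIndep_of_mul_self_le hT m Finset.univ (by simp [hcard])
    exact .inl ⟨t, htc, ht⟩

end RamseyIL

instance : DecidableRel E22 := fun _ _ => inferInstanceAs (Decidable (_ ∨ _ ∨ _ ∨ _))

theorem E22_add_right {a x y : ZMod 22} : E22 (x + a) (y + a) ↔ E22 x y := by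
  simp only [E22, add_sub_add_right_eq_sub]

theorem isOriented_E22 : IsOriented E22 := by unfold IsOriented; decide

theorem E22_not_trans : ∀ a b c, E22 a b → E22 b c → ¬E22 a c := by decide

theorem indepFreeOn_E22_nonNbrs_zero : IndepFreeOn E22 4 (nonNbrs E22 Finset.univ 0) := by
  decide

theorem not_hasIndep_E22 : ¬HasIndep E22 5 :=
  not_hasIndep_of_indepFreeOn_nonNbrs_zero (fun _ _ _ => E22_add_right)
    indepFreeOn_E22_nonNbrs_zero

theorem stmt14 :
    (¬ HasIndep E22 5 ∧
      ¬ ∃ a b c : ZMod 22, E22 a b ∧ E22 b c ∧ E22 a c) ∧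
    22 < ramseyIL 5 3 := by
  have hT : ¬∃ a b c : ZMod 22, E22 a b ∧ E22 b c ∧ E22 a c :=
    fun ⟨a, b, c, hab, hbc, hac⟩ => E22_not_trans a b c hab hbc hac
  refine ⟨⟨not_hasIndep_E22, hT⟩, ?_⟩
  simpa using card_lt_ramseyIL (isRamseyILBound_mul_self_three 5) isOriented_E22
    not_hasIndep_E22 ((hasTransTour_three_iff isOriented_E22).not.mpr hT)
end
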